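/- arXiv:2102.03199 — 9 statements merged into one kernel-verified Lean document; each statement's English description precedes it below -/
import Mathlib

section
/- Let X be a normed space, let a = (a_n) be a sequence in X with finite range, and let b = (b_n) be a sequence in X whose set of values is somewhere dense in X (i.e., its closure has nonempty interior). Then the set of values of the sequence (a_n + b_n) is somewhere dense in X. -/
/-!
Every `b n = (a n + b n) - a n` lies in one of the finitely many translates of the range of
`a + b` by the values of `a`; translates of a nowhere dense set are nowhere dense, and so is a
finite union of them.
-/

open Set
open scoped Pointwise

theorem IsNowhereDense.union {X : Type*} [TopologicalSpace X] {s t : Set X}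
    (hs : IsNowhereDense s) (ht : IsNowhereDense t) : IsNowhereDense (s ∪ t) := by
  rw [IsNowhereDense, closure_union, union_comm,
    interior_union_isClosed_of_interior_empty isClosed_closure hs]
  exact ht

theorem Set.Finite.isNowhereDense_biUnion {X ι : Type*} [TopologicalSpace X] {s : Set ι}
    (hs : s.Finite) {f : ι → Set X} (hf : ∀ i ∈ s, IsNowhereDense (f i)) :
    IsNowhereDense (⋃ i ∈ s, f i) := by
  induction s, hs using Set.Finite.induction_on with
  | empty => simp
  | @insert i s _ _ ih =>
    rw [biUnion_insert]
    exact (hf i (mem_insert i s)).union (ih fun j hj => hf j (mem_insert_of_mem i hj))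

theorem IsNowhereDense.sub_finite {X : Type*} [TopologicalSpace X] [AddGroup X]
    [IsTopologicalAddGroup X] {s t : Set X} (hs : IsNowhereDense s) (ht : t.Finite) :
    IsNowhereDense (s - t) := by
  rw [← iUnion_sub_right_image]
  exact ht.isNowhereDense_biUnion fun v _ =>
    (Homeomorph.subRight v).isInducing.isNowhereDense_image hs

theorem somewhere_dense_add_finite_range_general
    {X : Type*} [NormedAddCommGroup X]
    (a b : ℕ → X) (ha : (Set.range a).Finite)
    (hb : (interior (closure (Set.range b))).Nonempty) :
    (interior (closure (Set.range (fun n => a n + b n)))).Nonempty := by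
  rw [nonempty_iff_ne_empty]
  intro hsum
  have hsub : range b ⊆ range (fun n => a n + b n) - range a := by
    rintro _ ⟨n, rfl⟩
    exact ⟨_, ⟨n, rfl⟩, _, ⟨n, rfl⟩, add_sub_cancel_left _ _⟩
  exact hb.ne_empty ((IsNowhereDense.sub_finite hsum ha).mono hsub)

theorem somewhere_dense_add_finite_range
    {X : Type*} [NormedAddCommGroup X] [NormedSpace ℝ X]
    (a b : ℕ → X) (ha : (Set.range a).Finite)
    (hb : (interior (closure (Set.range b))).Nonempty) :
    (interior (closure (Set.range (fun n => a n + b n)))).Nonempty :=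
  somewhere_dense_add_finite_range_general a b ha hb
end

section
/- Every dense linear subspace E of ℓ^∞ (real bounded sequences with the sup norm) has algebraic (Hamel) dimension equal to the cardinality of the continuum. -/
/-!
The indicator functions of the subsets of `ℕ` are `2 ^ ℵ₀ = 𝔠` points of `ℓ^∞` at mutual
distance `1`, so every dense subset of `ℓ^∞` has at least `𝔠` elements. A subspace with Hamel
basis `B` is the union of the spans of the finite subsets of `B`; these are finite-dimensional,
hence separable, so a dense subspace yields a dense subset of `ℓ^∞` of cardinality
`max |B| ℵ₀`. Hence `|B| ≥ 𝔠`, while `|B| ≤ |ℓ^∞| = 𝔠`.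
-/

open Cardinal Submodule TopologicalSpace

universe u v

theorem Cardinal.mk_finset_le_max (α : Type u) : #(Finset α) ≤ max ℵ₀ #α := by
  classical
  exact (mk_le_of_surjective List.toFinset_surjective).trans (mk_list_le_max α)

section DensityOfSpan

variable (K M : Type*) [DivisionRing K] [TopologicalSpace K] [SeparableSpace K]
  [AddCommGroup M] [Module K M] [TopologicalSpace M] [IsTopologicalAddGroup M]
  [ContinuousSMul K M]

theorem exists_dense_mk_le_max_rank :
    ∃ D : Set M, Dense D ∧ #D ≤ max (Module.rank K M) ℵ₀ := by
  let b := Module.Basis.ofVectorSpace K M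
  have hsep (T : Finset (Module.Basis.ofVectorSpaceIndex K M)) :
      IsSeparable (span K (b '' T) : Set M) :=
    (T.finite_toSet.image b).isSeparable.span
  choose c hc_countable hc_closure using hsep
  refine ⟨⋃ T, c T, fun x => ?_, ?_⟩
  · exact closure_mono (Set.subset_iUnion c _) (hc_closure _ (b.mem_span_repr_support x))
  · calc #(⋃ T, c T) ≤ #(Finset _) * ⨆ T, #(c T) := mk_iUnion_le c
      _ ≤ max ℵ₀ (Module.rank K M) * ℵ₀ := by
        rw [← b.mk_eq_rank'']
        exact mul_le_mul' (mk_finset_le_max _)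
          (ciSup_le' fun T => le_aleph0_iff_set_countable.mpr (hc_countable T))
      _ = max (Module.rank K M) ℵ₀ := by rw [mul_aleph0_eq (le_max_left _ _), max_comm]

end DensityOfSpan

theorem Dense.lift_mk_le_of_pairwise_le_dist {X : Type u} {ι : Type v} [PseudoMetricSpace X]
    {D : Set X} (hD : Dense D) {x : ι → X} {ε : ℝ} (hε : 0 < ε)
    (hx : Pairwise fun i j => ε ≤ dist (x i) (x j)) : lift.{u} #ι ≤ lift.{v} #D := by
  have hnear (i : ι) : ∃ d : D, dist (x i) d < ε / 2 := by
    obtain ⟨d, hd, hdD⟩ := Metric.dense_iff.mp hD (x i) (ε / 2) (half_pos hε)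
    exact ⟨⟨d, hdD⟩, by rwa [Metric.mem_ball, dist_comm] at hd⟩
  choose d hd using hnear
  refine lift_mk_le_lift_mk_of_injective (f := d) fun i j hij => by_contra fun hne => ?_
  have hfar : ε ≤ dist (x i) (x j) := hx hne
  have hi := hd i
  rw [hij] at hi
  linarith [hd j, dist_triangle_right (x i) (x j) (d j)]

namespace lp

variable {α : Type*}

noncomputable def indicatorOne (A : Set α) : lp (fun _ : α => ℝ) ⊤ :=
  ⟨A.indicator 1, memℓp_infty ⟨1, by
    rintro _ ⟨i, rfl⟩
    by_cases hi : i ∈ A <;> simp [hi]⟩⟩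

theorem one_le_dist_indicatorOne {A B : Set α} (hAB : A ≠ B) :
    1 ≤ dist (indicatorOne A) (indicatorOne B) := by
  obtain ⟨i, hi⟩ : ∃ i, ¬(i ∈ A ↔ i ∈ B) := by simpa [Set.ext_iff] using hAB
  rw [dist_eq_norm]
  refine le_trans ?_ (norm_apply_le_norm ENNReal.top_ne_zero _ i)
  change 1 ≤ ‖A.indicator (1 : α → ℝ) i - B.indicator 1 i‖
  by_cases hA : i ∈ A <;> by_cases hB : i ∈ B <;> simp_all

theorem two_power_le_mk_of_dense {D : Set (lp (fun _ : α => ℝ) ⊤)} (hD : Dense D) :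
    2 ^ #α ≤ #D := by
  simpa [mk_set] using hD.lift_mk_le_of_pairwise_le_dist one_pos
    fun A B hAB => one_le_dist_indicatorOne (A := A) (B := B) hAB

end lp

theorem dense_subspace_of_linfty_rank_continuum
    (E : Submodule ℝ (lp (fun _ : ℕ => ℝ) ⊤))
    (hE : Dense (E : Set (lp (fun _ : ℕ => ℝ) ⊤))) :
    Module.rank ℝ E = Cardinal.continuum := by
  refine le_antisymm ?_ ?_
  · calc Module.rank ℝ E ≤ #E := rank_le_card ℝ E
      _ ≤ #(ℕ → ℝ) := mk_le_of_injective (Subtype.val_injective.comp Subtype.val_injective)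
      _ = 𝔠 := by simp [mk_real, continuum_power_aleph0]
  · obtain ⟨D, hD, hD_card⟩ := exists_dense_mk_le_max_rank ℝ E
    have hD_dense : Dense (((↑) : E → lp (fun _ : ℕ => ℝ) ⊤) '' D) :=
      hE.denseRange_val.dense_image continuous_subtype_val hD
    have : 𝔠 ≤ max (Module.rank ℝ E) ℵ₀ :=
      calc 𝔠 = 2 ^ #ℕ := by simp
        _ ≤ #(((↑) : E → lp (fun _ : ℕ => ℝ) ⊤) '' D) := lp.two_power_le_mk_of_dense hD_dense
        _ ≤ #D := mk_image_le
        _ ≤ max (Module.rank ℝ E) ℵ₀ := hD_card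
    exact (le_max_iff.mp this).resolve_right aleph0_lt_continuum.not_ge
end

section
/- If A is a dense subalgebra of ℓ^∞ (with coordinatewise multiplication) and G is any generating set of A as an algebra, then G has cardinality equal to the cardinality of the continuum. -/
open Cardinal Set

noncomputable section GenContAux

open scoped Classical

private abbrev EE := lp (fun _ : ℕ => ℝ) (⊤ : ENNReal)

private instance : Nonempty EE := ⟨0⟩

private def chi (s : Set ℕ) : EE :=
  ⟨fun n => if n ∈ s then (1:ℝ) else 0, memℓp_infty ⟨1, by
    rintro x ⟨n, rfl⟩
    dsimp only
    split <;> simp⟩⟩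

private lemma chi_apply (s : Set ℕ) (n : ℕ) : (chi s) n = if n ∈ s then (1:ℝ) else 0 := rfl

private lemma one_le_dist_chi {s t : Set ℕ} (h : s ≠ t) : 1 ≤ dist (chi s) (chi t) := by
  obtain ⟨n, hn⟩ : ∃ n, (n ∈ s ∧ n ∉ t) ∨ (n ∈ t ∧ n ∉ s) := by
    by_contra h'
    push_neg at h'
    exact h (Set.ext fun n => by have := h' n; tauto)
  rw [dist_eq_norm]
  have h1 : ‖(chi s - chi t) n‖ = 1 := by
    rw [lp.coeFn_sub, Pi.sub_apply, chi_apply, chi_apply]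
    rcases hn with ⟨h1, h2⟩ | ⟨h1, h2⟩ <;> simp [h1, h2]
  calc (1:ℝ) = ‖(chi s - chi t) n‖ := h1.symm
    _ ≤ ‖chi s - chi t‖ := lp.norm_apply_le_norm ENNReal.top_ne_zero _ n

private lemma continuum_le_mk_of_dense {D : Set EE} (hD : Dense D) :
    Cardinal.continuum ≤ Cardinal.mk D := by
  have key : ∀ s : Set ℕ, ∃ d : D, dist (chi s) (d : EE) < 1/2 := by
    intro s
    obtain ⟨y, hy, hlt⟩ := hD.exists_dist_lt (chi s) (by norm_num : (0:ℝ) < 1/2)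
    exact ⟨⟨y, hy⟩, hlt⟩
  choose g hg using key
  have hinj : Function.Injective g := by
    intro s t hst
    by_contra hne
    have := one_le_dist_chi hne
    have : dist (chi s) (chi t) < 1 := by
      calc dist (chi s) (chi t) ≤ dist (chi s) (g s : EE) + dist (g t : EE) (chi t) := by
            rw [hst]; exact dist_triangle _ _ _
        _ < 1/2 + 1/2 := by
            have := hg t
            have := hg s
            rw [dist_comm (g t : EE)]
            linarith
        _ = 1 := by norm_num
    linarith
  calc Cardinal.continuum = Cardinal.mk (Set ℕ) := by
        rw [Cardinal.mk_set, Cardinal.mk_nat, Cardinal.two_power_aleph0]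
    _ ≤ Cardinal.mk D := Cardinal.mk_le_of_injective hinj

variable (G : Set EE)

private def phi (l : List (ℚ × List G)) : EE :=
  (l.map fun p => (p.1 : ℝ) • (p.2.map Subtype.val).prod).sum

private lemma phi_append (l₁ l₂ : List (ℚ × List G)) :
    phi G (l₁ ++ l₂) = phi G l₁ + phi G l₂ := by
  simp [phi]

private lemma phi_smul (q : ℚ) (l : List (ℚ × List G)) :
    (q : ℝ) • phi G l = phi G (l.map fun p => (q * p.1, p.2)) := by
  induction l with
  | nil => simp [phi]
  | cons p l ih =>
    simp only [phi, List.map_cons, List.sum_cons, smul_add] at *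
    rw [← ih, smul_smul]
    push_cast
    ring_nf

private lemma dense_D (hG : Dense ((Algebra.adjoin ℝ G : Subalgebra ℝ EE) : Set EE)) :
    Dense (Set.range (phi G)) := by
  set D := Set.range (phi G) with hD
  have hadd : ∀ a ∈ closure D, ∀ b ∈ closure D, a + b ∈ closure D := by
    intro a ha b hb
    have hc : Continuous fun p : EE × EE => p.1 + p.2 := continuous_add
    have hmem : (a, b) ∈ closure (D ×ˢ D) := by
      rw [closure_prod_eq]; exact ⟨ha, hb⟩
    have := image_closure_subset_closure_image (s := D ×ˢ D) hc (Set.mem_image_of_mem _ hmem)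
    refine closure_mono ?_ this
    rintro _ ⟨⟨x, y⟩, ⟨⟨l₁, rfl⟩, ⟨l₂, rfl⟩⟩, rfl⟩
    exact ⟨l₁ ++ l₂, by simp [phi_append]⟩
  have hsmul : ∀ (r : ℝ), ∀ a ∈ closure D, r • a ∈ closure D := by
    intro r a ha
    have hc : Continuous fun p : ℝ × EE => p.1 • p.2 := continuous_smul
    have hQ : closure (Set.range ((↑) : ℚ → ℝ)) = Set.univ := by
      exact Rat.denseRange_cast.closure_range
    have hmem : (r, a) ∈ closure ((Set.range ((↑) : ℚ → ℝ)) ×ˢ D) := by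
      rw [closure_prod_eq, hQ]; exact ⟨trivial, ha⟩
    have := image_closure_subset_closure_image
      (s := (Set.range ((↑) : ℚ → ℝ)) ×ˢ D) hc (Set.mem_image_of_mem _ hmem)
    refine closure_mono ?_ this
    rintro _ ⟨⟨x, y⟩, ⟨⟨q, rfl⟩, ⟨l, rfl⟩⟩, rfl⟩
    exact ⟨l.map fun p => (q * p.1, p.2), by simp [← phi_smul]⟩
  let T : Submodule ℝ EE :=
    { carrier := closure D
      zero_mem' := subset_closure ⟨[], by simp [phi]⟩
      add_mem' := fun ha hb => hadd _ ha _ hb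
      smul_mem' := fun r a ha => hsmul r a ha }
  have hGT : (Submonoid.closure G : Set EE) ⊆ D := by
    intro m hm
    obtain ⟨l, hl, rfl⟩ := Submonoid.exists_list_of_mem_closure hm
    refine ⟨[(1, l.attach.map fun x => (⟨x.1, hl x.1 x.2⟩ : G))], ?_⟩
    simp only [phi, List.map_cons, List.map_nil, List.sum_cons, List.sum_nil, add_zero,
      List.map_map]
    rw [Rat.cast_one, one_smul]
    congr 1
    rw [show (Subtype.val ∘ fun x : {x // x ∈ l} => (⟨x.1, hl x.1 x.2⟩ : G)) = fun x : {x // x ∈ l} => x.1 from rfl]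
    exact List.attach_map_subtype_val l
  have hAT : ((Algebra.adjoin ℝ G : Subalgebra ℝ EE) : Set EE) ⊆ closure D := by
    intro x hx
    have : x ∈ Subalgebra.toSubmodule (Algebra.adjoin ℝ G) := hx
    rw [Algebra.adjoin_eq_span] at this
    have hle : Submodule.span ℝ (Submonoid.closure G : Set EE) ≤ T :=
      Submodule.span_le.mpr (hGT.trans subset_closure)
    exact hle this
  rw [← dense_closure]
  exact hG.mono hAT

end GenContAux

theorem generating_set_of_dense_subalgebra_card_continuum
    (A : Subalgebra ℝ (lp (fun _ : ℕ => ℝ) ⊤))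
    (G : Set (lp (fun _ : ℕ => ℝ) ⊤))
    (hG : Algebra.adjoin ℝ G = A)
    (hA : Dense (A : Set (lp (fun _ : ℕ => ℝ) ⊤))) :
    Cardinal.mk G = Cardinal.continuum := by
  refine le_antisymm ?_ ?_
  · -- |G| ≤ |ℓ^∞| ≤ |ℕ → ℝ| = 𝔠
    calc Cardinal.mk G ≤ Cardinal.mk EE := Cardinal.mk_le_of_injective Subtype.val_injective
      _ ≤ Cardinal.mk (ℕ → ℝ) := Cardinal.mk_le_of_injective Subtype.val_injective
      _ = Cardinal.continuum := by
          rw [Cardinal.mk_arrow]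
          simp [Cardinal.mk_real, Cardinal.continuum_power_aleph0]
  · -- lower bound
    have hdense : Dense (Set.range (phi G)) := by
      apply dense_D
      rwa [hG]
    have h1 : Cardinal.continuum ≤ Cardinal.mk (Set.range (phi G)) :=
      continuum_le_mk_of_dense hdense
    have h2 : Cardinal.mk (Set.range (phi G)) ≤ Cardinal.mk (List (ℚ × List G)) :=
      Cardinal.mk_range_le
    have h3 : Cardinal.mk (List (ℚ × List G)) ≤ max (Cardinal.mk G) Cardinal.aleph0 := by
      have hle : Cardinal.mk (ℚ × List G) ≤ max (Cardinal.mk G) Cardinal.aleph0 := by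
        rw [Cardinal.mk_prod]
        have hq : Cardinal.mk ℚ = Cardinal.aleph0 := Cardinal.mk_denumerable ℚ
        have hlist : Cardinal.mk (List G) ≤ max (Cardinal.mk G) Cardinal.aleph0 := by
          rcases isEmpty_or_nonempty G with h | h
          · have : Cardinal.mk (List G) ≤ Cardinal.aleph0 := by
              have : Countable (List G) := by infer_instance
              exact Cardinal.mk_le_aleph0
            exact this.trans (le_max_right _ _)
          · rw [Cardinal.mk_list_eq_max_mk_aleph0]
        calc Cardinal.lift.{0} (Cardinal.mk ℚ) * Cardinal.lift.{0} (Cardinal.mk (List G))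
            = Cardinal.aleph0 * Cardinal.mk (List G) := by simp [hq]
          _ ≤ Cardinal.aleph0 * max (Cardinal.mk G) Cardinal.aleph0 :=
              mul_le_mul_right hlist _
          _ ≤ max (Cardinal.mk G) Cardinal.aleph0 * max (Cardinal.mk G) Cardinal.aleph0 :=
              mul_le_mul_left (le_max_right _ _) _
          _ = max (Cardinal.mk G) Cardinal.aleph0 :=
              Cardinal.mul_eq_self (le_max_right _ _)
      rw [Cardinal.mk_list_eq_max_mk_aleph0]
      exact max_le hle (le_max_right _ _)
    have h4 : Cardinal.continuum ≤ max (Cardinal.mk G) Cardinal.aleph0 :=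
      h1.trans (h2.trans h3)
    rcases le_max_iff.mp h4 with h | h
    · exact h
    · exact absurd h (not_le.mpr Cardinal.aleph0_lt_continuum)
end

section
/- The set (ℓ^∞ \ c₀) ∪ {0} contains a dense linear subspace of ℓ^∞. -/
open Filter Topology Set Cardinal

noncomputable section
namespace DL

abbrev X : Type := lp (fun _ : ℕ => ℝ) ⊤

def c0 : Submodule ℝ X where
  carrier := {f | Tendsto (fun n => f n) atTop (𝓝 (0:ℝ))}
  add_mem' := by
    intro f g hf hg
    simpa [lp.coeFn_add, Pi.add_apply] using (hf.add hg)
  zero_mem' := by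
    simp only [Set.mem_setOf_eq, lp.coeFn_zero, Pi.zero_apply]
    exact tendsto_const_nhds
  smul_mem' := by
    intro a f hf
    have : Tendsto (fun n => a * f n) atTop (𝓝 (a * 0)) := hf.const_mul a
    simpa [lp.coeFn_smul, Pi.smul_apply, smul_eq_mul] using this

theorem mem_c0_iff {f : X} : f ∈ c0 ↔ Tendsto (fun n => f n) atTop (𝓝 (0:ℝ)) := Iff.rfl


private theorem gap (r : ℝ) (k : ℕ) : r - 1/(k+1) < r - 1/(k+2) := by
  have : (1:ℝ)/(k+2) < 1/(k+1) := by
    apply one_div_lt_one_div_of_lt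
    · positivity
    · linarith
  linarith

def q (r : ℝ) (k : ℕ) : ℚ := (exists_rat_btwn (gap r k)).choose

theorem q_spec (r : ℝ) (k : ℕ) : r - 1/(k+1) < q r k ∧ (q r k : ℝ) < r - 1/(k+2) :=
  (exists_rat_btwn (gap r k)).choose_spec

theorem q_strictMono (r : ℝ) : StrictMono (q r) := by
  intro k k' h
  have h1 := (q_spec r k).2
  have h2 := (q_spec r k').1
  have h3 : (1:ℝ)/(k'+1) ≤ 1/(k+2) := by
    apply one_div_le_one_div_of_le
    · positivity
    · have : (k:ℝ) + 1 ≤ k' := by exact_mod_cast Nat.succ_le_of_lt h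
      linarith
  have : (q r k : ℝ) < (q r k' : ℝ) := by linarith
  exact_mod_cast this

def A (r : ℝ) : Set ℕ := Set.range fun k => Encodable.encode (q r k)

theorem A_infinite (r : ℝ) : (A r).Infinite :=
  Set.infinite_range_of_injective (Encodable.encode_injective.comp (q_strictMono r).injective)

theorem A_inter_finite' {r s : ℝ} (h : r < s) : (A r ∩ A s).Finite := by
  have : A r ∩ A s ⊆ (fun k => Encodable.encode (q s k)) '' Iio ⌈1/(s-r)⌉₊ := by
    rintro n ⟨⟨k, rfl⟩, ⟨k', hk'⟩⟩
    refine ⟨k', ?_, hk'⟩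
    have heq : q s k' = q r k := Encodable.encode_injective hk'
    have h1 : (q r k : ℝ) < r := lt_trans (q_spec r k).2 (by
      have : (0:ℝ) < 1/(k+2) := by positivity
      linarith)
    have h2 : s - 1/(k'+1) < (q s k' : ℝ) := (q_spec s k').1
    rw [heq] at h2
    have h3 : s - r < 1/(k'+1) := by linarith
    have h4 : (k':ℝ) + 1 < 1/(s-r) := by
      rw [lt_div_iff₀ (by linarith)]
      have hk : (0:ℝ) < (k':ℝ) + 1 := by positivity
      rw [sub_lt_iff_lt_add, div_add' _ _ _ (ne_of_gt hk), lt_div_iff₀ hk] at h3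
      nlinarith
    have h5 : (k':ℝ) < ⌈1/(s-r)⌉₊ := lt_of_lt_of_le (by linarith) (Nat.le_ceil _)
    exact_mod_cast lt_of_lt_of_le h5 le_rfl
  exact Set.Finite.subset ((Set.finite_Iio _).image _) this

theorem A_inter_finite {r s : ℝ} (h : r ≠ s) : (A r ∩ A s).Finite := by
  rcases h.lt_or_gt with h | h
  · exact A_inter_finite' h
  · rw [Set.inter_comm]; exact A_inter_finite' h



open Classical in
def v (r : ℝ) : X :=
  ⟨fun n => if n ∈ A r then (1:ℝ) else 0, by
    apply memℓp_infty
    refine ⟨1, ?_⟩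
    rintro x ⟨n, rfl⟩
    dsimp only
    split <;> simp⟩

open Classical in
theorem v_apply (r : ℝ) (n : ℕ) : v r n = if n ∈ A r then (1:ℝ) else 0 := rfl

theorem indep : LinearIndependent ℝ (fun r : ℝ => Submodule.Quotient.mk (p := c0) (v r)) := by
  rw [linearIndependent_iff']
  intro t g hsum j hj
  have hmem : (∑ i ∈ t, g i • v i) ∈ c0 := by
    have h2 : c0.mkQ (∑ i ∈ t, g i • v i) = 0 := by
      rw [map_sum]
      simpa [Submodule.mkQ_apply] using hsum
    rwa [Submodule.mkQ_apply, Submodule.Quotient.mk_eq_zero] at h2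
  -- set of "bad" indices
  set B : Set ℕ := A j \ ⋃ i ∈ t.erase j, A i with hB
  have hBinf : B.Infinite := by
    have hsub : A j \ ⋃ i ∈ t.erase j, (A j ∩ A i) ⊆ B := by
      rintro n ⟨hn1, hn2⟩
      refine ⟨hn1, fun hmem' => hn2 ?_⟩
      simp only [Set.mem_iUnion, exists_prop] at hmem' ⊢
      obtain ⟨i, hi, hni⟩ := hmem'
      exact ⟨i, hi, hn1, hni⟩
    refine Set.Infinite.mono hsub ?_
    apply Set.Infinite.diff (A_infinite j)
    apply Set.Finite.biUnion (t.erase j).finite_toSet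
    intro i hi
    exact A_inter_finite (by exact fun h => (Finset.mem_erase.1 hi).1 h.symm)
  have hval : ∀ n ∈ B, (∑ i ∈ t, g i • v i) n = g j := by
    intro n hn
    rw [lp.coeFn_sum]
    rw [Finset.sum_apply]
    rw [Finset.sum_eq_single_of_mem j hj]
    · rw [lp.coeFn_smul, Pi.smul_apply, v_apply, if_pos hn.1, smul_eq_mul, mul_one]
    · intro i hi hij
      rw [lp.coeFn_smul, Pi.smul_apply, v_apply, if_neg, smul_eq_mul, mul_zero]
      intro hmem'
      exact hn.2 (Set.mem_biUnion (Finset.mem_erase.2 ⟨hij, hi⟩) hmem')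
  have hfreq : ∃ᶠ n in atTop, (∑ i ∈ t, g i • v i) n = g j := by
    rw [frequently_atTop]
    intro a
    obtain ⟨b, hb, hab⟩ := hBinf.exists_gt a
    exact ⟨b, le_of_lt hab, hval b hb⟩
  have := tendsto_nhds_unique_of_frequently_eq hmem (tendsto_const_nhds (x := g j)) hfreq
  exact this.symm

theorem rank_ge : Cardinal.continuum ≤ Module.rank ℝ (X ⧸ c0) := by
  have := indep.cardinal_le_rank
  rwa [Cardinal.mk_real] at this



theorem mk_X_le : #X ≤ Cardinal.continuum := by
  have h1 : #X ≤ #(∀ _ : ℕ, ℝ) := Cardinal.mk_le_of_injective (f := fun f : X => (f : ∀ _ : ℕ, ℝ))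
    (fun f g h => lp.ext h)
  have h2 : #(∀ _ : ℕ, ℝ) = Cardinal.continuum := by
    rw [← Cardinal.power_def, Cardinal.mk_real, Cardinal.mk_nat, Cardinal.continuum_power_aleph0]
  rwa [h2] at h1

theorem span_sup_ne_top {S : Set X} (hS : #S < Cardinal.continuum) :
    Submodule.span ℝ S ⊔ c0 ≠ ⊤ := by
  intro h
  have hmap : Submodule.map c0.mkQ (Submodule.span ℝ S ⊔ c0) = ⊤ := by
    rw [h, Submodule.map_top, Submodule.range_mkQ]
  rw [Submodule.map_sup, Submodule.map_span] at hmap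
  have hbot : Submodule.map c0.mkQ c0 = ⊥ := by
    rw [eq_bot_iff]
    rintro x ⟨y, hy, rfl⟩
    simp only [SetLike.mem_coe, Submodule.mem_bot, Submodule.mkQ_apply,
      Submodule.Quotient.mk_eq_zero]
    exact hy
  rw [hbot, sup_bot_eq] at hmap
  have h1 : Module.rank ℝ (X ⧸ c0) ≤ #(c0.mkQ '' S) := by
    conv_lhs => rw [← rank_top ℝ, ← hmap]
    exact rank_span_le (R := ℝ) _
  have h2 : #(c0.mkQ '' S) ≤ #S := Cardinal.mk_image_le
  exact absurd (rank_ge.trans (h1.trans h2)) (not_le.2 hS)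

theorem exists_good (x : X) (ε : ℝ) (hε : 0 < ε) {S : Set X} (hS : #S < Cardinal.continuum) :
    ∃ z : X, dist z x < ε ∧ z ∉ Submodule.span ℝ S ⊔ c0 := by
  by_contra hcon
  push_neg at hcon
  have hball : Metric.ball x ε ⊆ (Submodule.span ℝ S ⊔ c0 : Submodule ℝ X) := by
    intro z hz
    exact hcon z (by rwa [Metric.mem_ball] at hz)
  have hint : (interior ((Submodule.span ℝ S ⊔ c0 : Submodule ℝ X) : Set X)).Nonempty :=
    ⟨x, interior_mono hball (by rw [Metric.isOpen_ball.interior_eq]; exact Metric.mem_ball_self hε)⟩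
  exact span_sup_ne_top hS (Submodule.eq_top_of_nonempty_interior' _ hint)

-- the index type
def κ : Cardinal := #(X × ℕ)

theorem κ_le : κ ≤ Cardinal.continuum := by
  have : κ = #X * #ℕ := by rw [κ, Cardinal.mk_prod, Cardinal.lift_id, Cardinal.lift_id]
  rw [this, Cardinal.mk_nat]
  calc #X * ℵ₀ ≤ Cardinal.continuum * Cardinal.continuum :=
        mul_le_mul' mk_X_le Cardinal.aleph0_le_continuum
    _ = Cardinal.continuum := Cardinal.mul_eq_self Cardinal.aleph0_le_continuum

abbrev σι : Type := κ.ord.ToType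

def e : σι ≃ X × ℕ :=
  Classical.choice (Cardinal.eq.1 (by rw [Cardinal.mk_ord_toType]; rfl))

theorem mk_Iio_lt (i : σι) : #(Set.Iio i) < Cardinal.continuum :=
  lt_of_lt_of_le (Cardinal.mk_Iio_ord_toType i) κ_le

theorem step_ex (x : σι) (g : ∀ y, y < x → X) :
    ∃ z : X, dist z (e x).1 < 1/((e x).2+1) ∧
      z ∉ Submodule.span ℝ (Set.range fun p : Set.Iio x => g p.1 p.2) ⊔ c0 := by
  apply exists_good _ _ (by positivity)
  exact lt_of_le_of_lt Cardinal.mk_range_le (mk_Iio_lt x)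

def d : σι → X :=
  (IsWellFounded.wf (r := ((· < ·) : σι → σι → Prop))).fix
    (fun x ih => (step_ex x ih).choose)

theorem d_spec (x : σι) :
    dist (d x) (e x).1 < 1/((e x).2+1) ∧
      d x ∉ Submodule.span ℝ (Set.range fun p : Set.Iio x => d p.1) ⊔ c0 := by
  have h := WellFounded.fix_eq (IsWellFounded.wf (r := ((· < ·) : σι → σι → Prop)))
    (fun x ih => (step_ex x ih).choose) x
  rw [show d x = (step_ex x fun y _ => d y).choose from h]
  exact (step_ex x fun y _ => d y).choose_spec


theorem dense_E : Dense ((Submodule.span ℝ (Set.range d) : Submodule ℝ X) : Set X) := by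
  rw [Metric.dense_iff]
  intro x r hr
  obtain ⟨n, hn⟩ := exists_nat_one_div_lt hr
  set i := e.symm (x, n) with hi
  have hspec := (d_spec i).1
  have he : e i = (x, n) := Equiv.apply_symm_apply e (x, n)
  refine ⟨d i, ?_, Submodule.subset_span ⟨i, rfl⟩⟩
  rw [Metric.mem_ball]
  rw [he] at hspec
  exact lt_trans hspec hn

theorem not_in_c0 : ∀ f ∈ Submodule.span ℝ (Set.range d), f ≠ 0 → f ∉ c0 := by
  intro f hf hne hc0
  rw [Finsupp.mem_span_range_iff_exists_finsupp] at hf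
  obtain ⟨c, hc⟩ := hf
  have hcne : c ≠ 0 := by
    rintro rfl
    simp only [Finsupp.sum_zero_index] at hc
    exact hne hc.symm
  have hsupp : c.support.Nonempty := Finsupp.support_nonempty_iff.2 hcne
  set x := c.support.max' hsupp with hx
  have hcx : c x ≠ 0 := Finsupp.mem_support_iff.1 (c.support.max'_mem hsupp)
  have hsum : ∑ i ∈ c.support, c i • d i = f := by rw [← hc]; rfl
  have hsplit : c x • d x + ∑ i ∈ c.support.erase x, c i • d i = f := by
    exact (Finset.add_sum_erase _ (fun i => c i • d i) (c.support.max'_mem hsupp)).trans hsum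
  have hW : c x • d x ∈ Submodule.span ℝ (Set.range fun p : Set.Iio x => d p.1) ⊔ c0 := by
    rw [eq_sub_of_add_eq hsplit]
    apply Submodule.sub_mem
    · exact Submodule.mem_sup_right hc0
    · apply Submodule.mem_sup_left
      apply Submodule.sum_mem
      intro i hi
      apply Submodule.smul_mem
      apply Submodule.subset_span
      have hilt : i < x :=
        lt_of_le_of_ne (Finset.le_max' _ i (Finset.mem_of_mem_erase hi))
          (Finset.ne_of_mem_erase hi)
      exact ⟨⟨i, hilt⟩, rfl⟩
  have hdx : d x ∈ Submodule.span ℝ (Set.range fun p : Set.Iio x => d p.1) ⊔ c0 := by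
    have h2 := Submodule.smul_mem _ (c x)⁻¹ hW
    rwa [smul_smul, inv_mul_cancel₀ hcx, one_smul] at h2
  exact (d_spec x).2 hdx

end DL
end

open Filter Topology

theorem linfty_setminus_c0_dense_lineable :
    ∃ E : Submodule ℝ (lp (fun _ : ℕ => ℝ) ⊤),
      Dense (E : Set (lp (fun _ : ℕ => ℝ) ⊤)) ∧
      ∀ f ∈ E, f ≠ 0 → ¬ Tendsto (fun n => f n) atTop (𝓝 (0 : ℝ)) := by
  refine ⟨Submodule.span ℝ (Set.range DL.d), DL.dense_E, ?_⟩
  intro f hf hne ht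
  exact DL.not_in_c0 f hf hne ht
end

section
/- The set ℓ^∞ \ c₀ is maximal dense-lineable: (ℓ^∞ \ c₀) ∪ {0} contains a dense linear subspace of ℓ^∞ whose dimension equals the dimension of ℓ^∞ (namely the cardinality of the continuum). -/
/-!
Let `Y` be a subspace of a seminormed space `E` and `κ ≥ ℵ₀` a cardinal with
`dens E ≤ κ ≤ dim (E ⧸ Y)`. Enumerate the pairs (point of a dense set `D`, radius `1/(n+1)`)
by the ordinals below `κ` and choose, by transfinite recursion, a vector `vᵢ` in the `i`-th ball
whose class modulo `Y` is not in the span of the earlier classes: fewer than `κ` classes span a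
proper subspace of `E ⧸ Y`, and a proper subspace has empty interior. The span of the `vᵢ` is
dense, has dimension `κ`, and meets `Y` only in `0` because the classes of the `vᵢ` are
independent.

For `Y = c₀ ⊆ ℓ^∞` and `κ = 𝔠` it remains to see `dim (ℓ^∞ ⧸ c₀) ≥ 𝔠`: the indicators of an
almost disjoint family of infinite subsets of `ℕ` are independent modulo `c₀`, and the branches
of the binary tree, with nodes coded by natural numbers, form such a family of size `𝔠`.
-/

open Filter Topology Set Cardinal Submodule

section LinearAlgebra

variable {K M N : Type*} [DivisionRing K] [AddCommGroup M] [Module K M] [AddCommGroup N] [Module K N]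

theorem linearIndependent_of_notMem_span_image_Iio {ι : Type*} [LinearOrder ι] {v : ι → M}
    (h : ∀ i, v i ∉ span K (v '' Iio i)) : LinearIndependent K v := by
  rw [linearIndependent_iff_finset_linearIndependent]
  intro s
  induction s using Finset.induction_on_max with
  | empty => exact linearIndependent_empty_type
  | insert a t hlt ih =>
    have : LinearIndepOn K v (insert a t) :=
      LinearIndepOn.insert ih fun ha => h a (span_mono (image_mono fun x hx => hlt x hx) ha)
    rw [← Finset.coe_insert] at this
    exact this

theorem exists_linearIndependent_comp_of_forall_exists_notMem_span {ι : Type*} [LinearOrder ι]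
    [WellFoundedLT ι] (f : M →ₗ[K] N) (U : ι → Set M)
    (h : ∀ i (w : Iio i → N), ∃ x ∈ U i, f x ∉ span K (range w)) :
    ∃ v : ι → M, (∀ i, v i ∈ U i) ∧ LinearIndependent K (f ∘ v) := by
  choose g hg using h
  set v : ι → M := wellFounded_lt.fix fun i rec => g i fun j => f (rec j j.2)
  have hv : ∀ i, v i = g i fun j => f (v j) := wellFounded_lt.fix_eq _
  refine ⟨v, fun i => hv i ▸ (hg i _).1, linearIndependent_of_notMem_span_image_Iio fun i => ?_⟩
  rw [image_eq_range]
  have := (hg i fun j => f (v j)).2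
  rwa [← hv i] at this

theorem span_ne_top_of_mk_lt_rank {s : Set M} (hs : #s < Module.rank K M) : span K s ≠ ⊤ :=
  fun h => hs.not_ge <| by
    have := rank_span_le (R := K) s
    rwa [h, rank_top] at this

end LinearAlgebra

theorem Submodule.exists_mem_notMem_of_ne_top {𝕜 E : Type*} [NontriviallyNormedField 𝕜]
    [SeminormedAddCommGroup E] [NormedSpace 𝕜 E] {V : Submodule 𝕜 E} (hV : V ≠ ⊤) {U : Set E}
    (hU : IsOpen U) (hne : U.Nonempty) : ∃ x ∈ U, x ∉ V := by
  by_contra! hUV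
  exact hV (V.eq_top_of_nonempty_interior' (hne.mono (hU.subset_interior_iff.2 hUV)))

universe u

theorem exists_dense_submodule_disjoint_of_le_rank_quotient {𝕜 : Type*} {E : Type u}
    [NontriviallyNormedField 𝕜] [SeminormedAddCommGroup E] [NormedSpace 𝕜 E]
    (Y : Submodule 𝕜 E) {κ : Cardinal.{u}} (hκ : ℵ₀ ≤ κ) {D : Set E} (hD : Dense D)
    (hDκ : #D ≤ κ) (hYκ : κ ≤ Module.rank 𝕜 (E ⧸ Y)) :
    ∃ V : Submodule 𝕜 E, Dense (V : Set E) ∧ Module.rank 𝕜 V = κ ∧ Disjoint V Y := by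
  obtain ⟨ψ, hψ⟩ : ∃ ψ : κ.ord.ToType → D × ℕ, ψ.Surjective := by
    have : #(D × ℕ) ≤ #κ.ord.ToType := by
      simpa [mul_eq_self hκ] using mul_le_mul' hDκ hκ
    obtain ⟨emb⟩ := this
    have : Nonempty D := hD.nonempty.to_subtype
    exact ⟨Function.invFun emb, Function.invFun_surjective emb.injective⟩
  obtain ⟨v, hvU, hv⟩ := exists_linearIndependent_comp_of_forall_exists_notMem_span Y.mkQ
    (fun i => Metric.ball ((ψ i).1 : E) (1 / ((ψ i).2 + 1))) fun i w => by
      have hw : span 𝕜 (range w) ≠ ⊤ := span_ne_top_of_mk_lt_rank <|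
        mk_range_le.trans_lt <| (by simpa using mk_Iio_lt i : #(Iio i) < κ).trans_le hYκ
      refine (exists_mem_notMem_of_ne_top (V := (span 𝕜 (range w)).comap Y.mkQ) ?_
        Metric.isOpen_ball (Metric.nonempty_ball.2 Nat.one_div_pos_of_nat))
      rw [Ne, ← comap_top Y.mkQ]
      exact (comap_injective_of_surjective Y.mkQ_surjective).ne hw
  refine ⟨span 𝕜 (range v), ?_, ?_, ?_⟩
  · refine Dense.mono subset_span (dense_closure.1 (hD.mono fun d hd => ?_))
    refine Metric.mem_closure_iff.2 fun ε hε => ?_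
    obtain ⟨n, hn⟩ := exists_nat_one_div_lt hε
    obtain ⟨i, hi⟩ := hψ (⟨d, hd⟩, n)
    refine ⟨v i, mem_range_self i, ?_⟩
    have := hvU i
    simp only [hi, Metric.mem_ball] at this
    rw [dist_comm]
    exact this.trans hn
  · rw [rank_span (hv.of_comp _), mk_range_eq _ (hv.of_comp _).injective, mk_ord_toType]
  · simpa using Submodule.range_ker_disjoint hv

open scoped lp ENNReal

noncomputable def c₀ : Submodule ℝ ℓ^∞(ℕ, ℝ) :=
  (zeroAtFilterSubmodule ℝ (β := ℝ) (atTop : Filter ℕ)).comap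
    (lpSubmodule ℝ (fun _ : ℕ => ℝ) ⊤).subtype

theorem mem_c₀ {f : ℓ^∞(ℕ, ℝ)} : f ∈ c₀ ↔ Tendsto f atTop (𝓝 0) := Iff.rfl

noncomputable def lp.indicatorOne_s8 (s : Set ℕ) : ℓ^∞(ℕ, ℝ) :=
  ⟨s.indicator 1, memℓp_infty_iff.2 ⟨1, by
    rintro _ ⟨n, rfl⟩
    by_cases hn : n ∈ s <;> simp [hn]⟩⟩

theorem lp.coe_indicatorOne (s : Set ℕ) : ⇑(lp.indicatorOne_s8 s) = s.indicator 1 := rfl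

theorem linearIndependent_mkQ_indicatorOne {α : Type*} {A : α → Set ℕ}
    (hinf : ∀ a, (A a).Infinite) (hdisj : Pairwise fun a b => (A a ∩ A b).Finite) :
    LinearIndependent ℝ fun a => c₀.mkQ (lp.indicatorOne_s8 (A a)) := by
  classical
  rw [linearIndependent_iff']
  intro s g hg i hi
  have hsum : Tendsto (∑ a ∈ s, g a • (A a).indicator (1 : ℕ → ℝ)) atTop (𝓝 0) := by
    have : ∑ a ∈ s, g a • lp.indicatorOne_s8 (A a) ∈ c₀ := by
      rw [← Submodule.Quotient.mk_eq_zero, ← mkQ_apply]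
      simpa [map_sum] using hg
    rw [mem_c₀, lp.coeFn_sum] at this
    simp only [lp.coeFn_smul, lp.coe_indicatorOne] at this
    exact this
  set S := A i \ ⋃ a ∈ s.erase i, A i ∩ A a
  have hS : S.Infinite := (hinf i).sdiff <|
    (s.erase i).finite_toSet.biUnion fun a ha => hdisj (Finset.ne_of_mem_erase ha).symm
  have hval : ∀ n ∈ S, (∑ a ∈ s, g a • (A a).indicator (1 : ℕ → ℝ)) n = g i := by
    rintro n ⟨hni, hn⟩
    rw [Finset.sum_apply, Finset.sum_eq_single_of_mem i hi fun a ha hai => ?_]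
    · simp [hni]
    · have : n ∉ A a := fun hna => hn (mem_biUnion (Finset.mem_erase.2 ⟨hai, ha⟩) ⟨hni, hna⟩)
      simp [this]
  exact (tendsto_nhds_unique_of_frequently_eq hsum tendsto_const_nhds
    (Nat.frequently_atTop_iff_infinite.2 (hS.mono hval))).symm

def prefixCode (x : ℕ → Bool) (k : ℕ) : ℕ := Encodable.encode ((List.range k).map x)

theorem prefixCode_eq_prefixCode_iff {x y : ℕ → Bool} {k j : ℕ} :
    prefixCode x k = prefixCode y j ↔ k = j ∧ ∀ m < k, x m = y m := by
  simp only [prefixCode, Encodable.encode_inj]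
  constructor
  · intro h
    obtain rfl : k = j := by simpa using congrArg List.length h
    simpa [List.map_inj_left] using h
  · rintro ⟨rfl, h⟩
    simpa [List.map_inj_left] using h

theorem prefixCode_injective (x : ℕ → Bool) : Function.Injective (prefixCode x) :=
  fun _ _ h => (prefixCode_eq_prefixCode_iff.1 h).1

theorem finite_range_prefixCode_inter {x y : ℕ → Bool} (hxy : x ≠ y) :
    (range (prefixCode x) ∩ range (prefixCode y)).Finite := by
  obtain ⟨m, hm⟩ := Function.ne_iff.1 hxy
  refine ((finite_Iic m).image (prefixCode x)).subset ?_
  rintro _ ⟨⟨k, rfl⟩, j, hj⟩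
  obtain ⟨-, hagree⟩ := prefixCode_eq_prefixCode_iff.1 hj.symm
  exact ⟨k, not_lt.1 fun hk => hm (hagree m hk), rfl⟩

theorem continuum_le_rank_quotient_c₀ : 𝔠 ≤ Module.rank ℝ (ℓ^∞(ℕ, ℝ) ⧸ c₀) := by
  simpa using (linearIndependent_mkQ_indicatorOne
    (fun x => infinite_range_of_injective (prefixCode_injective x))
    fun _ _ => finite_range_prefixCode_inter).cardinal_le_rank

theorem mk_lp_infty_le_continuum : #ℓ^∞(ℕ, ℝ) ≤ 𝔠 :=
  (mk_le_of_injective (Subtype.coe_injective : Function.Injective ((↑) : ℓ^∞(ℕ, ℝ) → ℕ → ℝ))).trans_eq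
    (by simp [mk_real])

theorem linfty_setminus_c0_maximal_dense_lineable :
    ∃ E : Submodule ℝ (lp (fun _ : ℕ => ℝ) ⊤),
      Dense (E : Set (lp (fun _ : ℕ => ℝ) ⊤)) ∧
      Module.rank ℝ E = Cardinal.continuum ∧
      ∀ f ∈ E, f ≠ 0 → ¬ Tendsto (fun n => f n) atTop (𝓝 (0 : ℝ)) := by
  obtain ⟨V, hV, hrank, hdisj⟩ := exists_dense_submodule_disjoint_of_le_rank_quotient c₀
    aleph0_le_continuum dense_univ (by simpa using mk_lp_infty_le_continuum)
    continuum_le_rank_quotient_c₀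
  exact ⟨V, hV, hrank, fun f hf hf0 hlim => hf0 (disjoint_def.1 hdisj f hf hlim)⟩
end

section
/- Let P be a nonzero real polynomial in k variables with P(0) = 0, and let h₁, ..., h_k ∈ ℓ^∞ be bounded real sequences such that the set {(h₁(n), ..., h_k(n)) : n ∈ ℕ} is somewhere dense in ℝ^k. Then the sequence n ↦ P(h₁(n), ..., h_k(n)) does not converge to 0; i.e., P(h₁, ..., h_k) ∉ c₀, where the polynomial is evaluated coordinatewise. -/
open Filter Topology

theorem polynomial_of_somewhere_dense_sequences_not_null
    (k : ℕ) (P : MvPolynomial (Fin k) ℝ) (hP : P ≠ 0)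
    (hP0 : MvPolynomial.constantCoeff P = 0)
    (h : Fin k → ℕ → ℝ)
    (hbdd : ∀ i, ∃ C : ℝ, ∀ n, |h i n| ≤ C)
    (hdense : (interior (closure
      {y : Fin k → ℝ | ∃ n, y = fun i => h i n})).Nonempty) :
    ¬ Tendsto (fun n => MvPolynomial.eval (fun i => h i n) P)
        atTop (𝓝 (0 : ℝ)) := by
  intro htend
  set S : Set (Fin k → ℝ) := {y : Fin k → ℝ | ∃ n, y = fun i => h i n} with hS
  set f : (Fin k → ℝ) → ℝ := fun y => MvPolynomial.eval y P with hf
  obtain ⟨x₀, hx₀⟩ := hdense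
  have hfcont : Continuous f := MvPolynomial.continuous_eval P
  -- every point of the interior of the closure is in the closure of every tail
  have tail : ∀ x ∈ interior (closure S), ∀ N : ℕ,
      x ∈ closure {y : Fin k → ℝ | ∃ n, N ≤ n ∧ y = fun i => h i n} := by
    intro x hx N
    rcases Nat.eq_zero_or_pos k with hk | hk
    · subst hk
      have : x = fun i => h i N := funext fun i => i.elim0
      exact subset_closure ⟨N, le_refl N, this⟩
    · by_contra hcon
      haveI : Nonempty (Fin k) := ⟨⟨0, hk⟩⟩
      haveI : NeBot (𝓝[≠] x) := Module.punctured_nhds_neBot ℝ (Fin k → ℝ) x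
      set T := closure {y : Fin k → ℝ | ∃ n, N ≤ n ∧ y = fun i => h i n} with hT
      set head : Set (Fin k → ℝ) := (fun n => fun i => h i n) '' (Set.Iio N) with hhead
      have hheadfin : head.Finite := (Set.finite_Iio N).image _
      have hsub : closure S ⊆ head ∪ T := by
        apply closure_minimal
        · rintro y ⟨n, rfl⟩
          rcases lt_or_ge n N with hn | hn
          · exact Or.inl ⟨n, hn, rfl⟩
          · exact Or.inr (subset_closure ⟨n, hn, rfl⟩)
        · exact hheadfin.isClosed.union isClosed_closure
      have hW : interior (closure S) ∩ Tᶜ ∈ 𝓝 x :=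
        Filter.inter_mem (isOpen_interior.mem_nhds hx)
          ((isClosed_closure.isOpen_compl).mem_nhds hcon)
      have hWsub : interior (closure S) ∩ Tᶜ ⊆ head := by
        rintro y ⟨hy1, hy2⟩
        rcases hsub (interior_subset hy1) with hy | hy
        · exact hy
        · exact absurd hy hy2
      exact infinite_of_mem_nhds x hW (hheadfin.subset hWsub)
  -- f vanishes on the interior of the closure
  have key : ∀ x ∈ interior (closure S), f x = 0 := by
    intro x hx
    by_contra hfx
    set ε := |f x| / 2 with hε
    have hεpos : 0 < ε := by positivity
    obtain ⟨N, hN⟩ := (Metric.tendsto_atTop.mp htend) ε hεpos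
    have hV : f ⁻¹' Metric.ball (f x) ε ∈ 𝓝 x :=
      hfcont.continuousAt.preimage_mem_nhds (Metric.ball_mem_nhds _ hεpos)
    obtain ⟨y, hyV, n, hnN, rfl⟩ :=
      mem_closure_iff_nhds.mp (tail x hx N) _ hV
    have h1 : |f (fun i => h i n) - f x| < ε := by
      simpa [Real.dist_eq] using hyV
    have h2 : |f (fun i => h i n)| < ε := by
      simpa [Real.dist_eq] using hN n hnN
    have : |f x| < 2 * ε := by
      calc |f x| = |f (fun i => h i n) - (f (fun i => h i n) - f x)| := by ring_nf
        _ ≤ |f (fun i => h i n)| + |f (fun i => h i n) - f x| := abs_sub _ _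
        _ < ε + ε := add_lt_add h2 h1
        _ = 2 * ε := by ring
    rw [hε] at this
    linarith [abs_nonneg (f x)]
  -- f is analytic, hence vanishes everywhere
  have hanal : AnalyticOnNhd ℝ f Set.univ := by
    have := AnalyticOnNhd.eval_continuousLinearMap
      (ContinuousLinearMap.id ℝ (Fin k → ℝ)) P
    simpa using this
  have hev : f =ᶠ[𝓝 x₀] 0 := by
    filter_upwards [isOpen_interior.mem_nhds hx₀] with y hy using key y hy
  have hzero : Set.EqOn f 0 Set.univ :=
    hanal.eqOn_zero_of_preconnected_of_eventuallyEq_zero isPreconnected_univ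
      (Set.mem_univ x₀) hev
  apply hP
  apply MvPolynomial.funext
  intro x
  simpa using hzero (Set.mem_univ x)
end

section
/- The set ℓ^∞ \ c₀ is densely strongly 𝔠-algebrable: (ℓ^∞ \ c₀) ∪ {0} contains a dense subalgebra of ℓ^∞ (with coordinatewise product) generated by an algebraically independent set of cardinality continuum. -/
/-!
Split `ℕ` into the columns `{Nat.pair m j | j ∈ ℕ}`. For `x ∈ ℓ^∞` and a scale `a = 1/(k+1)`
take the generator whose entry at `n = Nat.pair m j` is `a (⌊x n / a⌋ + c^m)`, where
`c = exp u ∈ (0,1)` and the exponents `u`, one per pair `(x, k)`, are `ℚ`-linearly independent.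
It lies within `a` of `x`, so the generators are dense. Let `P ≠ 0` be a polynomial in distinct
generators. Along column `m` the values of `P` lie in the finite set of numbers `P(a (y + c^m))`,
`y` ranging over the integer parts. Each is an exponential sum `∑_d q_d (c^d)^m` with distinct
bases `c^d`, hence nonzero for large `m` (the largest base dominates). For an `m` at which all of
them are nonzero, `P` stays along column `m` in a finite set avoiding `0`, so it does not tend
to `0`.
-/

open Filter Topology MvPolynomial Cardinal

local notation "ℓ∞" => lp (fun _ : ℕ => ℝ) ⊤

theorem eventually_sum_mul_pow_ne_zero {α : Type*} {s : Finset α} (hs : s.Nonempty)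
    {t q : α → ℝ} (ht : ∀ i ∈ s, 0 < t i) (hinj : Set.InjOn t s) (hq : ∀ i ∈ s, q i ≠ 0) :
    ∀ᶠ m in atTop, ∑ i ∈ s, q i * t i ^ m ≠ 0 := by
  classical
  obtain ⟨j, hj, hmax⟩ := s.exists_max_image t hs
  have htj := ht j hj
  have hlim : Tendsto (fun m : ℕ => ∑ i ∈ s, q i * (t i / t j) ^ m) atTop (𝓝 (q j)) := by
    have hsum : ∑ i ∈ s, (if i = j then q j else 0) = q j := by simp [hj]
    rw [← hsum]
    refine tendsto_finsetSum _ fun i hi => ?_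
    split_ifs with hij
    · subst hij
      simp [div_self htj.ne']
    · have hlt : t i / t j < 1 :=
        (div_lt_one htj).2 ((hmax i hi).lt_of_ne fun h => hij (hinj hi hj h))
      simpa using (tendsto_pow_atTop_nhds_zero_of_lt_one
        (div_nonneg (ht i hi).le htj.le) hlt).const_mul (q i)
  filter_upwards [hlim.eventually_ne (hq j hj)] with m hm
  have hfactor : ∑ i ∈ s, q i * t i ^ m = t j ^ m * ∑ i ∈ s, q i * (t i / t j) ^ m := by
    rw [Finset.mul_sum]
    refine Finset.sum_congr rfl fun i _ => ?_
    rw [div_pow]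
    field_simp
  rw [hfactor]
  exact mul_ne_zero (pow_ne_zero _ htj.ne') hm

theorem MvPolynomial.eventually_eval_pow_ne_zero {ι : Type*} {c : ι → ℝ} (hc : ∀ i, 0 < c i)
    (hmon : Function.Injective fun d : ι →₀ ℕ => d.prod fun i k => c i ^ k)
    {Q : MvPolynomial ι ℝ} (hQ : Q ≠ 0) :
    ∀ᶠ m in atTop, eval (fun i => c i ^ m) Q ≠ 0 := by
  have heval : ∀ m : ℕ, eval (fun i => c i ^ m) Q =
      ∑ d ∈ Q.support, coeff d Q * (d.prod fun i k => c i ^ k) ^ m := by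
    intro m
    rw [eval_eq]
    refine Finset.sum_congr rfl fun d _ => ?_
    rw [Finsupp.prod, ← Finset.prod_pow]
    simp only [← pow_mul, mul_comm]
  simp only [heval]
  exact eventually_sum_mul_pow_ne_zero (support_nonempty.2 hQ)
    (fun d _ => Finset.prod_pos fun i _ => pow_pos (hc i) _) hmon.injOn
    (fun d hd => mem_support_iff.1 hd)

theorem injective_finsuppProd_exp_pow {ι : Type*} {u : ι → ℝ} (hu : LinearIndependent ℚ u) :
    Function.Injective fun d : ι →₀ ℕ => d.prod fun i k => Real.exp (u i) ^ k := by
  have hℕ : Function.Injective (Finsupp.linearCombination ℕ u) :=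
    linearIndependent_iff_injective_finsuppLinearCombination.1 (hu.restrict_scalars' ℕ)
  intro d d' h
  apply hℕ
  simpa only [Finsupp.prod, ← Real.exp_nat_mul, ← Real.exp_sum, Real.exp_eq_exp,
    Finsupp.linearCombination_apply, Finsupp.sum, nsmul_eq_mul] using h

theorem MvPolynomial.bind₁_affine_injective {K ι : Type*} [Field K] {a : ι → K}
    (ha : ∀ i, a i ≠ 0) (b : ι → K) :
    Function.Injective (bind₁ fun i => C (a i) * (C (b i) + X i) :
      MvPolynomial ι K →ₐ[K] MvPolynomial ι K) := by
  refine Function.LeftInverse.injective (g := bind₁ fun i => C (a i)⁻¹ * X i - C (b i)) ?_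
  have hinv : (bind₁ fun i => C (a i)⁻¹ * X i - C (b i)).comp
      (bind₁ fun i => C (a i) * (C (b i) + X i)) = AlgHom.id K (MvPolynomial ι K) := by
    ext i : 1
    simp only [AlgHom.comp_apply, bind₁_X_right, map_mul, map_add, bind₁_C_right,
      AlgHom.id_apply]
    have hCa : C (a i) * C (a i)⁻¹ = (1 : MvPolynomial ι K) := by
      rw [← C_mul, mul_inv_cancel₀ (ha i), C_1]
    linear_combination X i * hCa
  exact fun P => congrArg (· P) hinv

theorem finite_range_floor {ι : Type*} [Finite ι] {s : ℕ → ι → ℝ} {B : ι → ℝ}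
    (hs : ∀ n i, |s n i| ≤ B i) : (Set.range fun n i => ⌊s n i⌋).Finite :=
  (Set.Finite.pi fun i => Set.finite_Icc ⌊-B i⌋ ⌊B i⌋).subset <| Set.range_subset_iff.2
    fun n i _ =>
      ⟨Int.floor_mono (neg_le_of_abs_le (hs n i)), Int.floor_mono (le_of_abs_le (hs n i))⟩

theorem not_tendsto_eval_mul_int_add_pow {ι : Type*} [Finite ι] {P : MvPolynomial ι ℝ}
    (hP : P ≠ 0) {a c : ι → ℝ} (ha : ∀ i, a i ≠ 0) (hc : ∀ i, 0 < c i)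
    (hmon : Function.Injective fun d : ι →₀ ℕ => d.prod fun i k => c i ^ k)
    {K : ℕ → ι → ℤ} (hK : (Set.range K).Finite) :
    ¬ Tendsto (fun n => eval (fun i => a i * (K n i + c i ^ (Nat.unpair n).1)) P)
      atTop (𝓝 0) := by
  intro hlim
  let Q : (ι → ℤ) → MvPolynomial ι ℝ := fun y => bind₁ (fun i => C (a i) * (C (y i : ℝ) + X i)) P
  have hQ : ∀ y m, eval (fun i => c i ^ m) (Q y) = eval (fun i => a i * (y i + c i ^ m)) P := by
    intro y m
    rw [← coe_aeval_eq_eval, ← coe_aeval_eq_eval, AlgHom.coe_toRingHom, AlgHom.coe_toRingHom,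
      aeval_bind₁]
    simp
  have hQ0 : ∀ y, Q y ≠ 0 := fun y =>
    (map_ne_zero_iff _ (bind₁_affine_injective ha fun i => (y i : ℝ))).2 hP
  obtain ⟨m, hm⟩ :=
    (hK.eventually_all.2 fun y _ => eventually_eval_pow_ne_zero hc hmon (hQ0 y)).exists
  let V : Set ℝ := (fun y => eval (fun i => c i ^ m) (Q y)) '' Set.range K
  have hcolumn : ∀ j, eval (fun i => a i * (K (Nat.pair m j) i + c i ^ m)) P ∈ V :=
    fun j => ⟨K (Nat.pair m j), ⟨_, rfl⟩, hQ _ m⟩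
  have hpair : Tendsto (Nat.pair m) atTop atTop :=
    tendsto_atTop_mono (Nat.right_le_pair m) tendsto_id
  have hV0 : (0 : ℝ) ∈ V := (hK.image _).isClosed.mem_of_tendsto
    (by simpa [Function.comp_def] using hlim.comp hpair) (Eventually.of_forall hcolumn)
  obtain ⟨y, hy, hy0⟩ := hV0
  exact hm y hy hy0

theorem exists_fin_aeval_eq_of_mem_adjoin {R A : Type*} [CommSemiring R] [CommSemiring A]
    [Algebra R A] {s : Set A} {f : A} (hf : f ∈ Algebra.adjoin R s) :
    ∃ (n : ℕ) (g : Fin n → A) (P : MvPolynomial (Fin n) R),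
      Function.Injective g ∧ (∀ i, g i ∈ s) ∧ aeval g P = f := by
  rw [Algebra.adjoin_eq_range] at hf
  obtain ⟨P, rfl⟩ := hf
  obtain ⟨n, ρ, hρ, Q, rfl⟩ := exists_fin_rename P
  exact ⟨n, fun i => (ρ i : A), Q, Subtype.val_injective.comp hρ, fun i => (ρ i).2,
    (aeval_rename ..).symm⟩

theorem exists_linearIndependent_neg_of_mk_le {α : Type} (hα : #α ≤ 𝔠) :
    ∃ u : α → ℝ, LinearIndependent ℚ u ∧ ∀ i, u i < 0 := by
  let b := Module.Basis.ofVectorSpace ℚ ℝ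
  obtain ⟨e⟩ : Nonempty (α ↪ Module.Basis.ofVectorSpaceIndex ℚ ℝ) := by
    rw [← Cardinal.le_def, b.mk_eq_rank'', Real.rank_rat_real]
    exact hα
  let w : Module.Basis.ofVectorSpaceIndex ℚ ℝ → ℚˣ := fun l => if 0 < b l then -1 else 1
  refine ⟨(w • ⇑b) ∘ e, (b.linearIndependent.units_smul w).comp e e.injective, fun i => ?_⟩
  have hb := b.ne_zero (e i)
  change w (e i) • b (e i) < 0
  simp only [Units.smul_def, w]
  split_ifs with h
  · simpa using h
  · simpa using lt_of_le_of_ne (not_lt.1 h) hb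

theorem mk_lpInfty : #ℓ∞ = 𝔠 := by
  refine le_antisymm ?_ ?_
  · calc #ℓ∞ ≤ #(ℕ → ℝ) := mk_le_of_injective Subtype.val_injective
      _ = 𝔠 := by rw [← power_def, mk_real, mk_nat, continuum_power_aleph0]
  · rw [← mk_real]
    refine mk_le_of_injective (f := fun r : ℝ => (lp.single ⊤ 0 r : ℓ∞)) fun r s h => ?_
    simpa only [lp.single_apply_self] using congrArg (fun x : ℓ∞ => x 0) h

noncomputable def latticeShift (x : ℕ → ℝ) (a c : ℝ) (n : ℕ) : ℝ :=
  a * (⌊x n / a⌋ + c ^ (Nat.unpair n).1)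

theorem abs_latticeShift_sub_le (x : ℕ → ℝ) {a c : ℝ} (ha : 0 < a) (hc₀ : 0 ≤ c) (hc₁ : c ≤ 1)
    (n : ℕ) : |latticeShift x a c n - x n| ≤ a := by
  have hfract : latticeShift x a c n - x n = a * (c ^ (Nat.unpair n).1 - Int.fract (x n / a)) := by
    rw [latticeShift, Int.fract]
    field_simp
    ring
  have := Int.fract_nonneg (x n / a)
  have := Int.fract_lt_one (x n / a)
  have := pow_le_one₀ hc₀ hc₁ (n := (Nat.unpair n).1)
  have := pow_nonneg hc₀ (Nat.unpair n).1
  rw [hfract, abs_mul, abs_of_pos ha]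
  calc a * |c ^ (Nat.unpair n).1 - Int.fract (x n / a)| ≤ a * 1 := by
        gcongr
        rw [abs_le]
        constructor <;> linarith
    _ = a := mul_one a

theorem memℓp_latticeShift (x : ℓ∞) {a c : ℝ} (ha : 0 < a) (hc₀ : 0 ≤ c) (hc₁ : c ≤ 1) :
    Memℓp (latticeShift x a c) ⊤ := by
  refine memℓp_infty ⟨‖x‖ + a, Set.forall_mem_range.2 fun n => ?_⟩
  calc ‖latticeShift x a c n‖ ≤ ‖x n‖ + ‖latticeShift x a c n - x n‖ := norm_le_insert' _ _
    _ ≤ ‖x‖ + a := add_le_add (lp.norm_apply_le_norm ENNReal.top_ne_zero x n)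
        (abs_latticeShift_sub_le x ha hc₀ hc₁ n)

theorem lpInfty_aeval_apply {ι : Type*} (g : ι → ℓ∞) (P : MvPolynomial ι ℝ) (n : ℕ) :
    aeval g P n = eval (fun i => g i n) P := by
  let φ : ℓ∞ →ₐ[ℝ] ℝ :=
    (Pi.evalAlgHom ℝ (fun _ : ℕ => ℝ) n).comp (lpInftySubalgebra ℝ fun _ : ℕ => ℝ).val
  rw [← coe_aeval_eq_eval]
  exact congrArg (· P) (comp_aeval (f := g) φ)

theorem exists_linearIndependent_neg_lpInfty_prod_nat :
    ∃ u : ℓ∞ × ℕ → ℝ, LinearIndependent ℚ u ∧ ∀ p, u p < 0 :=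
  exists_linearIndependent_neg_of_mk_le (by simp [mk_lpInfty])

noncomputable def generatorExponent : ℓ∞ × ℕ → ℝ :=
  exists_linearIndependent_neg_lpInfty_prod_nat.choose

theorem linearIndependent_generatorExponent : LinearIndependent ℚ generatorExponent :=
  exists_linearIndependent_neg_lpInfty_prod_nat.choose_spec.1

theorem generatorExponent_neg (p : ℓ∞ × ℕ) : generatorExponent p < 0 :=
  exists_linearIndependent_neg_lpInfty_prod_nat.choose_spec.2 p

noncomputable def generator (p : ℓ∞ × ℕ) : ℓ∞ :=
  ⟨latticeShift p.1 (1 / (p.2 + 1)) (Real.exp (generatorExponent p)),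
    memℓp_latticeShift p.1 Nat.one_div_pos_of_nat (Real.exp_pos _).le
      (Real.exp_le_one_iff.2 (generatorExponent_neg p).le)⟩

theorem norm_generator_sub_le (p : ℓ∞ × ℕ) : ‖generator p - p.1‖ ≤ 1 / (p.2 + 1) :=
  lp.norm_le_of_forall_le Nat.one_div_pos_of_nat.le fun n =>
    abs_latticeShift_sub_le p.1 Nat.one_div_pos_of_nat (Real.exp_pos _).le
      (Real.exp_le_one_iff.2 (generatorExponent_neg p).le) n

theorem denseRange_generator : DenseRange generator := by
  refine Metric.denseRange_iff.2 fun x r hr => ?_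
  obtain ⟨k, hk⟩ := exists_nat_one_div_lt hr
  exact ⟨(x, k), by rw [dist_comm, dist_eq_norm]; exact (norm_generator_sub_le (x, k)).trans_lt hk⟩

theorem injective_generator_zero : Function.Injective fun x => generator (x, 0) := by
  intro x y (h : generator (x, 0) = generator (y, 0))
  have hfract : ∀ z : ℓ∞, Int.fract (generator (z, 0) (Nat.pair 1 0)) =
      Real.exp (generatorExponent (z, 0)) := fun z => by
    simp only [generator, latticeShift, Nat.unpair_pair, Nat.cast_zero, zero_add, div_one,
      one_mul, pow_one, Int.fract_intCast_add]
    exact Int.fract_eq_self.2 ⟨(Real.exp_pos _).le,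
      Real.exp_lt_one_iff.2 (generatorExponent_neg _)⟩
  have hexp : Real.exp (generatorExponent (x, 0)) = Real.exp (generatorExponent (y, 0)) := by
    rw [← hfract, ← hfract, h]
  exact congrArg Prod.fst (linearIndependent_generatorExponent.injective (Real.exp_injective hexp))

theorem mk_range_generator : #(Set.range generator) = 𝔠 := by
  refine le_antisymm ((mk_set_le _).trans mk_lpInfty.le) ?_
  rw [← mk_lpInfty]
  exact mk_le_of_injective (f := fun x => (⟨generator (x, 0), (x, 0), rfl⟩ : Set.range generator))
    fun x y h => injective_generator_zero (congrArg Subtype.val h)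

theorem not_tendsto_aeval_generator {ι : Type*} [Finite ι] {p : ι → ℓ∞ × ℕ}
    (hp : Function.Injective p) {P : MvPolynomial ι ℝ} (hP : P ≠ 0) :
    ¬ Tendsto (fun n => aeval (generator ∘ p) P n) atTop (𝓝 0) := by
  simp only [lpInfty_aeval_apply]
  refine not_tendsto_eval_mul_int_add_pow hP (fun i => Nat.one_div_pos_of_nat.ne')
    (fun i => Real.exp_pos _)
    (injective_finsuppProd_exp_pow (linearIndependent_generatorExponent.comp p hp))
    (finite_range_floor (B := fun i => ‖(p i).1‖ * ((p i).2 + 1)) fun n i => ?_)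
  rw [one_div, div_inv_eq_mul, abs_mul, abs_of_pos (by positivity : (0 : ℝ) < (p i).2 + 1)]
  gcongr
  exact lp.norm_apply_le_norm ENNReal.top_ne_zero (p i).1 n

theorem not_tendsto_aeval_of_mem_range_generator {ι : Type*} [Finite ι] {g : ι → ℓ∞}
    (hg : Function.Injective g) (hgen : ∀ i, g i ∈ Set.range generator)
    {P : MvPolynomial ι ℝ} (hP : P ≠ 0) :
    ¬ Tendsto (fun n => aeval g P n) atTop (𝓝 0) := by
  choose p hp using hgen
  obtain rfl : generator ∘ p = g := funext hp
  exact not_tendsto_aeval_generator hg.of_comp hP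

theorem linfty_setminus_c0_densely_strongly_continuum_algebrable :
    ∃ G : Set (lp (fun _ : ℕ => ℝ) ⊤),
      Cardinal.mk G = Cardinal.continuum ∧
      (∀ (k : ℕ) (g : Fin k → lp (fun _ : ℕ => ℝ) ⊤),
        Function.Injective g → (∀ i, g i ∈ G) →
        ∀ P : MvPolynomial (Fin k) ℝ, MvPolynomial.constantCoeff P = 0 →
          MvPolynomial.aeval g P = 0 → P = 0) ∧
      Dense (↑(NonUnitalAlgebra.adjoin ℝ G) : Set (lp (fun _ : ℕ => ℝ) ⊤)) ∧
      ∀ f ∈ NonUnitalAlgebra.adjoin ℝ G, f ≠ 0 →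
        ¬ Tendsto (fun n => f n) atTop (𝓝 (0 : ℝ)) := by
  refine ⟨Set.range generator, mk_range_generator, ?_,
    denseRange_generator.mono (NonUnitalAlgebra.subset_adjoin ℝ), ?_⟩
  · intro k g hg hgen P _ hzero
    by_contra hP
    refine not_tendsto_aeval_of_mem_range_generator hg hgen hP ?_
    simp [hzero]
  · intro f hf hf0
    obtain ⟨n, g, P, hg, hgen, rfl⟩ :=
      exists_fin_aeval_eq_of_mem_adjoin (NonUnitalAlgebra.adjoin_le_algebra_adjoin ℝ _ hf)
    exact not_tendsto_aeval_of_mem_range_generator hg hgen fun hP => hf0 (by rw [hP, map_zero])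
end

section
/- The set ℓ^∞ \ c, where c is the space of convergent real sequences, contains a dense linear subspace of ℓ^∞ (together with 0) of dimension continuum. -/
open Filter Topology Set Cardinal

noncomputable section
namespace LinftyAux

abbrev M := lp (fun _ : ℕ => ℝ) ⊤

/-- the submodule of convergent sequences -/
def cSub : Submodule ℝ M where
  carrier := {f : M | ∃ l : ℝ, Tendsto (fun n => f n) atTop (𝓝 l)}
  add_mem' := by
    rintro f g ⟨l, hl⟩ ⟨l', hl'⟩
    refine ⟨l + l', ?_⟩
    have : (fun n => (f + g) n) = fun n => f n + g n := by
      ext n; simp [lp.coeFn_add]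
    rw [this]; exact hl.add hl'
  zero_mem' := by
    refine ⟨0, ?_⟩
    have : (fun n => (0 : M) n) = fun _ => (0:ℝ) := by ext n; simp [lp.coeFn_zero]
    rw [this]; exact tendsto_const_nhds
  smul_mem' := by
    rintro a f ⟨l, hl⟩
    refine ⟨a * l, ?_⟩
    have : (fun n => (a • f) n) = fun n => a * f n := by
      ext n; simp [lp.coeFn_smul]
    rw [this]; exact hl.const_mul a

abbrev Q := M ⧸ cSub

def π : M →ₗ[ℝ] Q := cSub.mkQ

lemma mem_cSub {f : M} : f ∈ cSub ↔ ∃ l : ℝ, Tendsto (fun n => f n) atTop (𝓝 l) := Iff.rfl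


def preCode (x : ℕ → Bool) (n : ℕ) : ℕ :=
  2 * Encodable.encode (List.ofFn fun i : Fin (n + 1) => x i)

lemma preCode_injOn {x y : ℕ → Bool} {n m : ℕ} (h : preCode x n = preCode y m) :
    n = m ∧ ∀ i : Fin (n + 1), x i = y i := by
  have h2 : Encodable.encode (List.ofFn fun i : Fin (n + 1) => x i)
      = Encodable.encode (List.ofFn fun i : Fin (m + 1) => y i) := by
    unfold preCode at h; omega
  have h3 := Encodable.encode_injective h2
  have hlen : n + 1 = m + 1 := by simpa using congrArg List.length h3
  obtain rfl : n = m := by omega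
  rw [List.ofFn_inj] at h3
  exact ⟨rfl, fun i => congrFun h3 i⟩

def A (x : ℕ → Bool) : Set ℕ := Set.range (preCode x)

lemma A_infinite (x : ℕ → Bool) : (A x).Infinite :=
  Set.infinite_range_of_injective (fun n m h => (preCode_injOn h).1)

lemma odd_notMem_A (x : ℕ → Bool) (k : ℕ) : 2 * k + 1 ∉ A x := by
  rintro ⟨n, hn⟩
  unfold preCode at hn; omega

lemma A_inter_finite {x y : ℕ → Bool} (hxy : x ≠ y) : (A x ∩ A y).Finite := by
  obtain ⟨k, hk⟩ := Function.ne_iff.mp hxy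
  apply Set.Finite.subset ((Set.finite_Iio k).image (preCode x))
  rintro n ⟨⟨a, rfl⟩, ⟨b, hb⟩⟩
  obtain ⟨rfl, hall⟩ := preCode_injOn hb.symm
  refine ⟨a, ?_, rfl⟩
  by_contra hak
  simp only [Set.mem_Iio, not_lt] at hak
  exact hk (hall ⟨k, by omega⟩)


def chi (x : ℕ → Bool) : M :=
  ⟨Set.indicator (A x) (fun _ => (1:ℝ)), memℓp_infty ⟨1, by
    rintro - ⟨n, rfl⟩
    by_cases h : n ∈ A x <;> simp [Set.indicator_apply, h]⟩⟩

open Classical in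
lemma chi_apply (x : ℕ → Bool) (n : ℕ) :
    (chi x : M) n = if n ∈ A x then (1:ℝ) else 0 := by
  show Set.indicator (A x) (fun _ => (1:ℝ)) n = _
  rw [Set.indicator_apply]

lemma eq_of_tendsto_of_infinite {s : ℕ → ℝ} {l a : ℝ}
    (h : Tendsto s atTop (𝓝 l)) (hinf : {n | s n = a}.Infinite) : a = l := by
  have hfreq : ∃ᶠ n in atTop, s n = a := Nat.frequently_atTop_iff_infinite.2 hinf
  have hne : (atTop ⊓ 𝓟 {n | s n = a}).NeBot := Filter.frequently_iff_neBot.mp hfreq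
  have h1 : Tendsto s (atTop ⊓ 𝓟 {n | s n = a}) (𝓝 l) := h.mono_left inf_le_left
  have h2 : Tendsto s (atTop ⊓ 𝓟 {n | s n = a}) (𝓝 a) := by
    refine Tendsto.congr' ?_ tendsto_const_nhds
    rw [Filter.EventuallyEq, eventually_inf_principal]
    exact Filter.Eventually.of_forall fun n hn => hn.symm
  exact tendsto_nhds_unique h2 h1


lemma indep_chi : LinearIndependent ℝ (fun x : ℕ → Bool => π (chi x)) := by
  classical
  rw [linearIndependent_iff']
  intro s g hsum x0 hx0
  have hmem : (∑ x ∈ s, g x • chi x) ∈ cSub := by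
    have h0 : π (∑ x ∈ s, g x • chi x) = 0 := by
      rw [map_sum]; simp_rw [map_smul]; exact hsum
    exact (Submodule.Quotient.mk_eq_zero _).mp h0
  obtain ⟨l, hl⟩ := hmem
  set F : ℕ → ℝ := fun n => (∑ x ∈ s, g x • chi x) n with hF
  have hFval : ∀ n, F n = ∑ x ∈ s, g x * (if n ∈ A x then (1:ℝ) else 0) := by
    intro n
    simp only [hF]
    rw [lp.coeFn_sum, Finset.sum_apply]
    refine Finset.sum_congr rfl fun x hx => ?_
    rw [lp.coeFn_smul, Pi.smul_apply, chi_apply, smul_eq_mul]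
  have hl0 : (0:ℝ) = l := by
    refine eq_of_tendsto_of_infinite hl ?_
    apply Set.Infinite.mono (s := Set.range fun k => 2 * k + 1)
    · rintro - ⟨k, rfl⟩
      simp only [Set.mem_setOf_eq, hFval]
      exact Finset.sum_eq_zero fun x hx => by
        rw [if_neg (odd_notMem_A x k), mul_zero]
    · exact Set.infinite_range_of_injective (fun a b h => by omega)
  have hgx0 : g x0 = l := by
    refine eq_of_tendsto_of_infinite hl ?_
    have hfin : (A x0 ∩ ⋃ y ∈ s.erase x0, A y).Finite := by
      rw [Set.inter_iUnion₂]
      apply Set.Finite.biUnion (Set.finite_mem_finset _)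
      intro y hy
      exact A_inter_finite (Finset.ne_of_mem_erase hy).symm
    have hsub : (A x0 \ (A x0 ∩ ⋃ y ∈ s.erase x0, A y)) ⊆ {n | F n = g x0} := by
      intro n hn
      obtain ⟨hn1, hn2⟩ := hn
      have hnothers : ∀ y ∈ s.erase x0, n ∉ A y := by
        intro y hy hny
        exact hn2 ⟨hn1, Set.mem_biUnion hy hny⟩
      simp only [Set.mem_setOf_eq, hFval]
      rw [Finset.sum_eq_single x0]
      · rw [if_pos hn1, mul_one]
      · intro y hy hyx
        rw [if_neg (hnothers y (Finset.mem_erase.mpr ⟨hyx, hy⟩)), mul_zero]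
      · intro h; exact absurd hx0 h
    exact Set.Infinite.mono hsub (((A_infinite x0).diff hfin))
  rw [hgx0, ← hl0]

lemma mk_nat_bool : (#(ℕ → Bool)) = Cardinal.continuum := by
  rw [← Cardinal.power_def Bool ℕ, Cardinal.mk_bool, Cardinal.mk_nat, Cardinal.two_power_aleph0]

lemma rank_Q : Cardinal.continuum ≤ Module.rank ℝ Q := by
  have h := indep_chi.cardinal_le_rank
  rwa [mk_nat_bool] at h

lemma fresh (s : Set Q) (hs : #s < Cardinal.continuum) :
    ∃ v : M, ‖v‖ ≤ 1 ∧ π v ∉ Submodule.span ℝ s := by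
  by_contra hc
  push_neg at hc
  have hall : ∀ f : M, π f ∈ Submodule.span ℝ s := by
    intro f
    have hn : (0:ℝ) < ‖f‖ + 1 := by positivity
    have h1 : ‖(‖f‖ + 1)⁻¹ • f‖ ≤ 1 := by
      rw [norm_smul, Real.norm_eq_abs, abs_inv, abs_of_pos hn]
      rw [inv_mul_le_iff₀ hn]
      linarith
    have h2 := hc _ h1
    have h3 : π f = (‖f‖ + 1) • π ((‖f‖ + 1)⁻¹ • f) := by
      rw [map_smul, smul_smul, mul_inv_cancel₀ (ne_of_gt hn), one_smul]
    rw [h3]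
    exact Submodule.smul_mem _ _ h2
  have htop : Submodule.span ℝ s = ⊤ := by
    rw [eq_top_iff]
    rintro q -
    obtain ⟨f, rfl⟩ := cSub.mkQ_surjective q
    exact hall f
  have h1 : Module.rank ℝ Q ≤ #s := by
    calc Module.rank ℝ Q = Module.rank ℝ (⊤ : Submodule ℝ Q) := (rank_top ℝ Q).symm
      _ = Module.rank ℝ (Submodule.span ℝ s) := by rw [htop]
      _ ≤ #s := rank_span_le (R := ℝ) s
  exact absurd (rank_Q.trans h1) (not_le.mpr hs)

lemma mk_M : (#M) = Cardinal.continuum := by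
  apply le_antisymm
  · have h1 : (#M) ≤ #(ℕ → ℝ) :=
      Cardinal.mk_le_of_injective (f := fun f : M => (f : ∀ n : ℕ, ℝ))
        (fun f g h => lp.ext h)
    have h2 : #(ℕ → ℝ) = Cardinal.continuum := by
      rw [← Cardinal.power_def ℝ ℕ, Cardinal.mk_real, Cardinal.mk_nat,
        Cardinal.continuum_power_aleph0]
    rwa [h2] at h1
  · have hmem : ∀ r : ℝ, Memℓp (fun _ : ℕ => r) (⊤ : ENNReal) := fun r =>
      memℓp_infty ⟨|r|, by rintro - ⟨n, rfl⟩; simp⟩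
    have h := Cardinal.mk_le_of_injective (f := fun r : ℝ => (⟨fun _ => r, hmem r⟩ : M))
      (fun r s h => by
        have := congrFun (congrArg Subtype.val h) 0
        exact this)
    rwa [Cardinal.mk_real] at h

abbrev ii : Type := Cardinal.continuum.ord.ToType

lemma exists_enum : Nonempty (ii ≃ M × ℕ) := by
  apply Cardinal.eq.mp
  rw [Cardinal.mk_ord_toType, Cardinal.mk_prod, Cardinal.lift_id, Cardinal.lift_id,
    mk_M, Cardinal.mk_nat]
  exact (Cardinal.mul_aleph0_eq aleph0_le_continuum).symm

def pe : ii ≃ M × ℕ := exists_enum.some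
def d (i : ii) : M := (pe i).1
def eps (i : ii) : ℝ := (((pe i).2 : ℝ) + 1)⁻¹

lemma eps_pos (i : ii) : 0 < eps i := by
  have : (0:ℝ) < ((pe i).2 : ℝ) + 1 := by positivity
  exact inv_pos.mpr this

open Classical in
def FF : ∀ i : ii, (∀ j, j < i → M) → M := fun i rec =>
  if h : ∃ v : M, ‖v‖ ≤ 1 ∧ π v ∉ Submodule.span ℝ
      (insert (π (d i))
        (Set.range fun j : {j : ii // j < i} => π (d j.1 + eps j.1 • rec j.1 j.2)))
    then h.choose else 0

def u : ii → M := (wellFounded_lt (α := ii)).fix FF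

lemma u_eq (i : ii) : u i = FF i (fun j _ => u j) := WellFounded.fix_eq _ _ _

def w (i : ii) : M := d i + eps i • u i

def S (i : ii) : Set Q :=
  insert (π (d i)) (Set.range fun j : {j : ii // j < i} => π (w j.1))

lemma mk_S_lt (i : ii) : #(S i) < Cardinal.continuum := by
  refine lt_of_le_of_lt (Cardinal.mk_insert_le) ?_
  refine Cardinal.add_lt_of_lt aleph0_le_continuum ?_
    (lt_of_lt_of_le Cardinal.one_lt_aleph0 aleph0_le_continuum)
  exact lt_of_le_of_lt Cardinal.mk_range_le (Cardinal.mk_Iio_ord_toType i)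

lemma u_spec (i : ii) : ‖u i‖ ≤ 1 ∧ π (u i) ∉ Submodule.span ℝ (S i) := by
  have hset : (insert (π (d i))
      (Set.range fun j : {j : ii // j < i} => π (d j.1 + eps j.1 • u j.1))) = S i := rfl
  have hex : ∃ v : M, ‖v‖ ≤ 1 ∧ π v ∉ Submodule.span ℝ
      (insert (π (d i))
        (Set.range fun j : {j : ii // j < i} => π (d j.1 + eps j.1 • u j.1))) := by
    rw [hset]; exact fresh _ (mk_S_lt i)
  have hu : u i = hex.choose := by rw [u_eq]; unfold FF; exact dif_pos hex
  rw [hu]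
  have hspec := hex.choose_spec
  refine ⟨hspec.1, fun hc => hspec.2 ?_⟩
  rw [← hset] at hc
  exact hc

lemma key : ∀ (s : Finset ii) (g : ii → ℝ),
    (∑ i ∈ s, g i • π (w i)) = 0 → ∀ i ∈ s, g i = 0 := by
  classical
  intro s
  induction s using Finset.strongInduction with
  | _ s IH =>
    intro g hsum i hi
    have hne : s.Nonempty := ⟨i, hi⟩
    set m := s.max' hne with hmdef
    have hms : m ∈ s := s.max'_mem hne
    by_cases hgm : g m = 0
    · have hsum2 := hsum
      rw [← Finset.add_sum_erase _ _ hms, hgm, zero_smul, zero_add] at hsum2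
      have hrest := IH (s.erase m) (Finset.erase_ssubset hms) g hsum2
      by_cases him : i = m
      · rw [him]; exact hgm
      · exact hrest i (Finset.mem_erase.mpr ⟨him, hi⟩)
    · exfalso
      have hrepr : π (w m) ∈ Submodule.span ℝ
          (Set.range fun j : {j : ii // j < m} => π (w j.1)) := by
        have hsum2 := hsum
        rw [← Finset.add_sum_erase _ _ hms] at hsum2
        have h1 : g m • π (w m) = -∑ j ∈ s.erase m, g j • π (w j) :=
          eq_neg_of_add_eq_zero_left hsum2
        have h2 : π (w m) = (g m)⁻¹ • (g m • π (w m)) := by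
          rw [smul_smul, inv_mul_cancel₀ hgm, one_smul]
        rw [h2, h1]
        refine Submodule.smul_mem _ _ (Submodule.neg_mem _ (Submodule.sum_mem _ ?_))
        intro j hj
        refine Submodule.smul_mem _ _ (Submodule.subset_span ?_)
        have hjm : j < m :=
          lt_of_le_of_ne (s.le_max' j (Finset.mem_of_mem_erase hj)) (Finset.ne_of_mem_erase hj)
        exact ⟨⟨j, hjm⟩, rfl⟩
      have hd : π (d m) ∈ Submodule.span ℝ (S m) :=
        Submodule.subset_span (Set.mem_insert _ _)
      have hw : π (w m) ∈ Submodule.span ℝ (S m) :=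
        Submodule.span_mono (Set.subset_insert _ _) hrepr
      have heps : eps m ≠ 0 := ne_of_gt (eps_pos m)
      have hum : π (u m) = (eps m)⁻¹ • (π (w m) - π (d m)) := by
        have : π (w m) = π (d m) + eps m • π (u m) := by
          rw [w]; rw [map_add, map_smul]
        rw [this]
        rw [add_sub_cancel_left, smul_smul, inv_mul_cancel₀ heps, one_smul]
      have hu : π (u m) ∈ Submodule.span ℝ (S m) := by
        rw [hum]
        exact Submodule.smul_mem _ _ (Submodule.sub_mem _ hw hd)
      exact (u_spec m).2 hu

lemma indepPW : LinearIndependent ℝ (fun i => π (w i)) := linearIndependent_iff'.mpr key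

lemma indepW : LinearIndependent ℝ w := by
  have h : ⇑π ∘ w = fun i => π (w i) := rfl
  exact LinearIndependent.of_comp π (by rw [h]; exact indepPW)

def E : Submodule ℝ M := Submodule.span ℝ (Set.range w)

lemma dense_E : Dense (E : Set M) := by
  rw [Metric.dense_iff]
  intro x r hr
  obtain ⟨n, hn⟩ := exists_nat_one_div_lt hr
  set i := pe.symm (x, n) with hidef
  have hd : d i = x := by rw [d, hidef, Equiv.apply_symm_apply]
  have heps : eps i = ((n:ℝ) + 1)⁻¹ := by rw [eps, hidef, Equiv.apply_symm_apply]
  refine ⟨w i, ?_, Submodule.subset_span (Set.mem_range_self i)⟩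
  rw [Metric.mem_ball, dist_eq_norm, w, hd]
  have h1 : x + eps i • u i - x = eps i • u i := by abel
  rw [h1, norm_smul, Real.norm_eq_abs, abs_of_pos (eps_pos i), heps]
  calc ((n:ℝ) + 1)⁻¹ * ‖u i‖ ≤ ((n:ℝ) + 1)⁻¹ * 1 := by
        refine mul_le_mul_of_nonneg_left (u_spec i).1 (by positivity)
    _ = 1 / ((n:ℝ) + 1) := by ring
    _ < r := hn

lemma rank_E : Module.rank ℝ E = Cardinal.continuum := by
  apply le_antisymm
  · calc Module.rank ℝ E ≤ Module.rank ℝ M := Submodule.rank_le E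
      _ ≤ #M := rank_le_card ℝ M
      _ = Cardinal.continuum := mk_M
  · set v : ii → E := fun i => ⟨w i, Submodule.subset_span (Set.mem_range_self i)⟩ with hv
    have hvw : ⇑E.subtype ∘ v = w := rfl
    have hli : LinearIndependent ℝ v :=
      LinearIndependent.of_comp E.subtype (by rw [hvw]; exact indepW)
    have h := hli.cardinal_le_rank
    rwa [Cardinal.mk_ord_toType] at h

lemma inter_c (f : M) (hf : f ∈ E) (hc : f ∈ cSub) : f = 0 := by
  have hπ : π f = 0 := (Submodule.Quotient.mk_eq_zero _).mpr hc
  rw [E, Finsupp.mem_span_range_iff_exists_finsupp] at hf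
  obtain ⟨cf, hcf⟩ := hf
  have h1 : π f = cf.sum fun i a => a • π (w i) := by
    rw [← hcf, map_finsuppSum]
    exact Finsupp.sum_congr fun i _ => by rw [map_smul]
  have h2 : Finsupp.linearCombination ℝ (fun i => π (w i)) cf = 0 := by
    rw [Finsupp.linearCombination_apply, ← h1, hπ]
  have h3 : cf = 0 := linearIndependent_iff.mp indepPW cf h2
  rw [← hcf, h3, Finsupp.sum_zero_index]

end LinftyAux
end

theorem linfty_setminus_c_maximal_dense_lineable :
    ∃ E : Submodule ℝ (lp (fun _ : ℕ => ℝ) ⊤),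
      Dense (E : Set (lp (fun _ : ℕ => ℝ) ⊤)) ∧
      Module.rank ℝ E = Cardinal.continuum ∧
      ∀ f ∈ E, f ≠ 0 → ¬ ∃ l : ℝ, Tendsto (fun n => f n) atTop (𝓝 l) := by
  refine ⟨LinftyAux.E, LinftyAux.dense_E, LinftyAux.rank_E, ?_⟩
  intro f hf hne hex
  exact hne (LinftyAux.inter_c f hf (LinftyAux.mem_cSub.mpr hex))
end

section
/- Let (A_i, j_i), i = 1, ..., p, be distinct pairs with A_i ⊆ ℕ and j_i ∈ ℕ, let (a_{(A,j)}(k))_k be almost disjoint infinite subsets of ℕ indexed by such pairs, let x = (x_k) be a bounded sequence whose range is somewhere dense in ℝ, and set f_{(A,j)} = χ_A + (1/j)·Σ_k x_k·χ_{{a_{(A,j)}(k)}}. Then for any scalars c₁, ..., c_p not all zero, the sequence c₁f_{(A₁,j₁)} + ... + c_p f_{(A_p,j_p)} does not belong to c₀. -/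
open Filter Topology Classical

theorem combination_of_perturbed_characteristics_not_null
    (a : (Set ℕ × ℕ+) → ℕ → ℕ)
    (ha_mono : ∀ i, StrictMono (a i))
    (ha_ad : ∀ i i', i ≠ i' → (Set.range (a i) ∩ Set.range (a i')).Finite)
    (x : ℕ → ℝ) (hx_bdd : ∃ C : ℝ, ∀ k, |x k| ≤ C)
    (hx_dense : (interior (closure (Set.range x))).Nonempty)
    (f : (Set ℕ × ℕ+) → ℕ → ℝ)
    (hf_off : ∀ A : Set ℕ, ∀ j : ℕ+, ∀ n, n ∉ Set.range (a (A, j)) →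
      f (A, j) n = (if n ∈ A then (1 : ℝ) else 0))
    (hf_on : ∀ A : Set ℕ, ∀ j : ℕ+, ∀ k,
      f (A, j) (a (A, j) k) =
        (if a (A, j) k ∈ A then (1 : ℝ) else 0) + (1 / (j : ℝ)) * x k)
    (p : ℕ) (Q : Fin p → Set ℕ × ℕ+) (hQ : Function.Injective Q)
    (c : Fin p → ℝ) (hc : c ≠ 0) :
    ¬ Tendsto (fun n => ∑ i, c i * f (Q i) n) atTop (𝓝 (0 : ℝ)) := by
  classical
  intro hT
  obtain ⟨i₀, hi₀⟩ := Function.ne_iff.1 hc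
  simp only [Pi.zero_apply] at hi₀
  have hoff : ∀ i : Set ℕ × ℕ+, ∀ n, n ∉ Set.range (a i) →
      f i n = (if n ∈ i.1 then (1:ℝ) else 0) := fun i => by
    obtain ⟨A, j⟩ := i; exact hf_off A j
  have hon : ∀ i : Set ℕ × ℕ+, ∀ k,
      f i (a i k) = (if a i k ∈ i.1 then (1:ℝ) else 0) + (1 / ((i.2 : ℕ) : ℝ)) * x k :=
    fun i => by obtain ⟨A, j⟩ := i; exact hf_on A j
  set r : ℝ := c i₀ * (1 / (((Q i₀).2 : ℕ) : ℝ)) with hr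
  have hjpos : (0:ℝ) < (((Q i₀).2 : ℕ) : ℝ) := by exact_mod_cast (Q i₀).2.pos
  have hrne : r ≠ 0 := mul_ne_zero hi₀ (by positivity)
  -- finite "bad" set of indices k
  have hBfin : (⋃ i ∈ {i : Fin p | i ≠ i₀},
      (Set.range (a (Q i₀)) ∩ Set.range (a (Q i)))).Finite := by
    apply Set.Finite.biUnion (Set.toFinite _)
    intro i hi
    exact ha_ad _ _ (fun h => hi (hQ h.symm))
  have hK : ((a (Q i₀)) ⁻¹' (⋃ i ∈ {i : Fin p | i ≠ i₀},
      (Set.range (a (Q i₀)) ∩ Set.range (a (Q i))))).Finite :=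
    hBfin.preimage ((ha_mono _).injective.injOn)
  obtain ⟨N₀, hN₀⟩ := hK.bddAbove
  have hnot : ∀ k, N₀ + 1 ≤ k → ∀ i, i ≠ i₀ → a (Q i₀) k ∉ Set.range (a (Q i)) := by
    intro k hk i hi hmem
    have hkK : k ∈ (a (Q i₀)) ⁻¹' (⋃ i ∈ {i : Fin p | i ≠ i₀},
        (Set.range (a (Q i₀)) ∩ Set.range (a (Q i)))) := by
      simp only [Set.mem_preimage, Set.mem_iUnion]
      exact ⟨i, hi, ⟨⟨k, rfl⟩, hmem⟩⟩
    have := hN₀ hkK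
    omega
  -- the finite-valued "characteristic" part
  set s : ℕ → ℝ := fun n => ∑ i, c i * (if n ∈ (Q i).1 then (1:ℝ) else 0) with hs
  have hSfin : (Set.range s).Finite := by
    have hsub : Set.range s ⊆
        Set.range (fun P : Fin p → Prop => ∑ i, c i * (if P i then (1:ℝ) else 0)) := by
      rintro _ ⟨n, rfl⟩
      exact ⟨fun i => n ∈ (Q i).1, rfl⟩
    exact (Set.finite_range _).subset hsub
  -- value of the sum along a (Q i₀)
  have hval : ∀ k, N₀ + 1 ≤ k →
      (∑ i, c i * f (Q i) (a (Q i₀) k)) = s (a (Q i₀) k) + r * x k := by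
    intro k hk
    have hcongr : ∀ i ∈ Finset.univ, c i * f (Q i) (a (Q i₀) k)
        = c i * (if a (Q i₀) k ∈ (Q i).1 then (1:ℝ) else 0)
          + (if i = i₀ then r * x k else 0) := by
      intro i _
      by_cases hii : i = i₀
      · subst hii
        rw [hon (Q i) k, if_pos rfl, hr]
        ring
      · rw [hoff (Q i) _ (hnot k hk i hii), if_neg hii, add_zero]
    rw [Finset.sum_congr rfl hcongr, Finset.sum_add_distrib]
    simp [hs]
  -- the interval inside the closure of the range of x
  obtain ⟨y, hy⟩ := hx_dense
  obtain ⟨δ, hδ, hball⟩ := Metric.isOpen_iff.1 isOpen_interior y hy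
  have hball' : Metric.ball y δ ⊆ closure (Set.range x) := hball.trans interior_subset
  have hballinf : ∀ z : ℝ, ∀ η : ℝ, 0 < η → (Metric.ball z η).Infinite := by
    intro z η hη
    rw [Real.ball_eq_Ioo]
    exact Set.Ioo_infinite (by linarith)
  -- the ball is in the closure of every tail of x
  have hclose : ∀ N : ℕ, Metric.ball y δ ⊆ closure {t | ∃ k, N ≤ k ∧ x k = t} := by
    intro N z hz
    by_contra hzc
    obtain ⟨η, hη, hsub⟩ :=
      Metric.isOpen_iff.1 (isClosed_closure.isOpen_compl) z hzc
    have hzy : dist z y < δ := Metric.mem_ball.1 hz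
    set η' := min η (δ - dist z y) with hη'def
    have hη' : 0 < η' := lt_min hη (by linarith)
    have h1 : Metric.ball z η' ⊆ Metric.ball y δ := by
      intro w hw
      have hw' : dist w z < η' := Metric.mem_ball.1 hw
      have : dist w y ≤ dist w z + dist z y := dist_triangle w z y
      have : dist w y < δ := by
        have := min_le_right η (δ - dist z y)
        calc dist w y ≤ dist w z + dist z y := dist_triangle w z y
          _ < η' + dist z y := by linarith
          _ ≤ (δ - dist z y) + dist z y := by linarith [min_le_right η (δ - dist z y)]
          _ = δ := by ring
      exact Metric.mem_ball.2 this
    have h2 : Metric.ball z η' ⊆ (closure {t | ∃ k, N ≤ k ∧ x k = t})ᶜ := by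
      intro w hw
      exact hsub (Metric.mem_ball.2 (lt_of_lt_of_le (Metric.mem_ball.1 hw)
        (min_le_left _ _)))
    -- range x splits
    have hrange : Set.range x ⊆ (x '' Set.Iio N) ∪ {t | ∃ k, N ≤ k ∧ x k = t} := by
      rintro _ ⟨k, rfl⟩
      by_cases hkN : k < N
      · exact Or.inl ⟨k, hkN, rfl⟩
      · exact Or.inr ⟨k, by omega, rfl⟩
    have hfinim : (x '' Set.Iio N).Finite := (Set.finite_Iio N).image x
    have hclrange : closure (Set.range x) ⊆
        (x '' Set.Iio N) ∪ closure {t | ∃ k, N ≤ k ∧ x k = t} := by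
      have : closure (Set.range x) ⊆
          closure ((x '' Set.Iio N) ∪ {t | ∃ k, N ≤ k ∧ x k = t}) :=
        closure_mono hrange
      rwa [closure_union, hfinim.isClosed.closure_eq] at this
    have hfin : (Metric.ball z η').Finite := by
      apply hfinim.subset
      intro w hw
      have hw1 : w ∈ closure (Set.range x) := hball' (h1 hw)
      rcases hclrange hw1 with h | h
      · exact h
      · exact absurd h (h2 hw)
    exact (hballinf z η' hη') hfin
  -- finite target set
  set S' : Set ℝ := (fun t => -t / r) '' (Set.range s) with hS'
  have hS'fin : S'.Finite := hSfin.image _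
  -- every point of the ball is within ε of S', for every ε
  have hkey : ∀ ε : ℝ, 0 < ε → ∀ z ∈ Metric.ball y δ, ∃ v ∈ S', dist z v ≤ ε := by
    intro ε hε z hz
    have hεr : 0 < ε * |r| := mul_pos hε (abs_pos.2 hrne)
    have hev : ∀ᶠ n in atTop, |(∑ i, c i * f (Q i) n)| < ε * |r| := by
      have := Metric.tendsto_nhds.1 hT (ε * |r|) hεr
      simpa [Real.dist_eq] using this
    have hcomp : ∀ᶠ k in atTop, |(∑ i, c i * f (Q i) (a (Q i₀) k))| < ε * |r| :=
      ((ha_mono (Q i₀)).tendsto_atTop).eventually hev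
    obtain ⟨N₁, hN₁⟩ := eventually_atTop.1 hcomp
    set N := max N₁ (N₀ + 1) with hN
    -- tail of x is within ε of S'
    set T : Set ℝ := ⋃ v ∈ S', Metric.closedBall v ε with hTdef
    have hTclosed : IsClosed T :=
      hS'fin.isClosed_biUnion (fun v _ => Metric.isClosed_closedBall)
    have htail : {t | ∃ k, N ≤ k ∧ x k = t} ⊆ T := by
      rintro _ ⟨k, hkN, rfl⟩
      have hk1 : N₁ ≤ k := le_trans (le_max_left _ _) hkN
      have hk0 : N₀ + 1 ≤ k := le_trans (le_max_right _ _) hkN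
      have habs := hN₁ k hk1
      rw [hval k hk0] at habs
      refine Set.mem_biUnion (⟨s (a (Q i₀) k), ⟨a (Q i₀) k, rfl⟩, rfl⟩ : _ ∈ S') ?_
      rw [Metric.mem_closedBall, Real.dist_eq]
      have : x k - (-(s (a (Q i₀) k)) / r) = (s (a (Q i₀) k) + r * x k) / r := by
        field_simp
        ring
      rw [this, abs_div]
      rw [div_le_iff₀ (abs_pos.2 hrne)]
      linarith [habs]
    have hz' : z ∈ T := hTclosed.closure_subset ((closure_mono htail) (hclose N hz))
    obtain ⟨v, hv, hzv⟩ := Set.mem_iUnion₂.1 hz'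
    exact ⟨v, hv, Metric.mem_closedBall.1 hzv⟩
  -- hence the ball is contained in the finite set S'
  have hballS' : Metric.ball y δ ⊆ S' := by
    intro z hz
    have : z ∈ closure S' := by
      rw [Metric.mem_closure_iff]
      intro ε hε
      obtain ⟨v, hv, hzv⟩ := hkey (ε/2) (by linarith) z hz
      exact ⟨v, hv, lt_of_le_of_lt hzv (by linarith)⟩
    rwa [hS'fin.isClosed.closure_eq] at this
  exact (hballinf y δ hδ) (hS'fin.subset hballS')
end
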